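/- arXiv:1401.4780 — 7 statements merged into one kernel-verified Lean document; each statement's English description precedes it below -/
import Mathlib

section
/- For every x ∈ ℝⁿ and every i ∈ {1,…,m}, let x⁺(i) = x − ((a_iᵀx − b_i)/‖a_i‖²) a_i be the result of one Kaczmarz projection onto the hyperplane a_iᵀz = b_i. Then the expected squared distance to the solution set after one step of the randomized Kaczmarz method, in which row i is chosen with probability ‖a_i‖²/‖A‖_F², satisfies Σ_{i=1}^m (‖a_i‖²/‖A‖_F²) ‖x⁺(i) − (x⁺(i))*‖² ≤ (1 − λ_min/‖A‖_F²) ‖x − x*‖². -/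
/-!
Each Kaczmarz step projects `x` orthogonally onto a hyperplane `aᵢᵀz = bᵢ` that contains `x*`,
so by Pythagoras `‖x⁺(i) - x*‖² = ‖x - x*‖² - rᵢ² / ‖aᵢ‖²` with `r = A (x - x*)`, and `x⁺(i)*`
is at least as close to `x⁺(i)` as `x*`. Averaging with the weights `‖aᵢ‖² / ‖A‖_F²` subtracts
`‖A (x - x*)‖² / ‖A‖_F²`. Finally, `x - x*` is orthogonal to `ker A = ker AᵀA` (first-order
optimality of the projection), and expanding it in an eigenbasis of `AᵀA` only involves nonzero
eigenvalues, whence `‖A (x - x*)‖² = (x - x*)ᵀ AᵀA (x - x*) ≥ λ_min ‖x - x*‖²`.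
-/

open Matrix Finset

section DotProduct

variable {ι : Type*} [Fintype ι]

lemma sum_sq_eq_dotProduct_self (v : ι → ℝ) : ∑ i, v i ^ 2 = v ⬝ᵥ v := by
  simp only [dotProduct, sq]

lemma sum_sub_sq_eq_dotProduct_self (u w : ι → ℝ) :
    ∑ i, (u i - w i) ^ 2 = (u - w) ⬝ᵥ (u - w) :=
  sum_sq_eq_dotProduct_self (u - w)

lemma dotProduct_self_pos {v : ι → ℝ} (hv : v ≠ 0) : 0 < v ⬝ᵥ v := by
  simpa using dotProduct_self_star_pos_iff.mpr hv

lemma dotProduct_sub_smul_self (u w : ι → ℝ) (t : ℝ) :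
    (u - t • w) ⬝ᵥ (u - t • w) = u ⬝ᵥ u - 2 * t * (u ⬝ᵥ w) + t ^ 2 * (w ⬝ᵥ w) := by
  simp only [sub_dotProduct, dotProduct_sub, smul_dotProduct, dotProduct_smul, smul_eq_mul,
    dotProduct_comm w u]
  ring

lemma dotProduct_eq_zero_of_forall_le_sub_smul {u w : ι → ℝ}
    (h : ∀ t : ℝ, u ⬝ᵥ u ≤ (u - t • w) ⬝ᵥ (u - t • w)) : u ⬝ᵥ w = 0 := by
  have hquad : ∀ t : ℝ, 0 ≤ (w ⬝ᵥ w) * (t * t) + (-2 * (u ⬝ᵥ w)) * t + 0 := fun t => by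
    have := h t
    rw [dotProduct_sub_smul_self] at this
    linarith
  have hdiscrim := discrim_le_zero hquad
  rw [discrim] at hdiscrim
  nlinarith [sq_nonneg (u ⬝ᵥ w)]

end DotProduct

section Kaczmarz

variable {m ι : Type*} [Fintype ι]

lemma sub_dotProduct_eq_zero_of_forall_solution_le {A : Matrix m ι ℝ} {b : m → ℝ}
    {y p : ι → ℝ} (hp : A *ᵥ p = b)
    (hmin : ∀ z, A *ᵥ z = b → (y - p) ⬝ᵥ (y - p) ≤ (y - z) ⬝ᵥ (y - z))
    {w : ι → ℝ} (hw : A *ᵥ w = 0) : (y - p) ⬝ᵥ w = 0 := by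
  refine dotProduct_eq_zero_of_forall_le_sub_smul fun t => ?_
  have hsol : A *ᵥ (p + t • w) = b := by simp [mulVec_add, mulVec_smul, hp, hw]
  simpa only [sub_add_eq_sub_sub] using hmin _ hsol

noncomputable def kaczmarzStep (a : ι → ℝ) (β : ℝ) (x : ι → ℝ) : ι → ℝ :=
  x - ((a ⬝ᵥ x - β) / (a ⬝ᵥ a)) • a

lemma kaczmarzStep_sub_dotProduct_self {a x z : ι → ℝ} {β : ℝ} (hz : a ⬝ᵥ z = β) :
    (kaczmarzStep a β x - z) ⬝ᵥ (kaczmarzStep a β x - z)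
      = (x - z) ⬝ᵥ (x - z) - (a ⬝ᵥ (x - z)) ^ 2 / (a ⬝ᵥ a) := by
  have hres : a ⬝ᵥ x - β = a ⬝ᵥ (x - z) := by rw [dotProduct_sub, hz]
  have hstep : kaczmarzStep a β x - z = (x - z) - ((a ⬝ᵥ (x - z)) / (a ⬝ᵥ a)) • a := by
    rw [kaczmarzStep, hres]
    abel
  rw [hstep, dotProduct_sub_smul_self, dotProduct_comm (x - z) a]
  by_cases ha : a ⬝ᵥ a = 0
  · simp [ha]
  · field_simp
    ring

lemma sum_div_sum_mul_le_of_le_sub_div [Fintype m] [Nonempty m] {N d ρ : m → ℝ} {D : ℝ}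
    (hN : ∀ i, 0 < N i) (hd : ∀ i, d i ≤ D - ρ i / N i) :
    ∑ i, N i / (∑ j, N j) * d i ≤ D - (∑ i, ρ i) / ∑ j, N j := by
  have hF : 0 < ∑ j, N j := sum_pos (fun i _ => hN i) univ_nonempty
  calc ∑ i, N i / (∑ j, N j) * d i ≤ ∑ i, N i / (∑ j, N j) * (D - ρ i / N i) :=
        sum_le_sum fun i _ => mul_le_mul_of_nonneg_left (hd i) (div_nonneg (hN i).le hF.le)
    _ = ∑ i, (N i * D / ∑ j, N j - ρ i / ∑ j, N j) :=
        sum_congr rfl fun i _ => by field_simp [(hN i).ne']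
    _ = D - (∑ i, ρ i) / ∑ j, N j := by
        rw [sum_sub_distrib, ← sum_div, ← sum_div, ← sum_mul]
        field_simp

end Kaczmarz

namespace Matrix.IsHermitian

variable {n : Type*} [Fintype n] [DecidableEq n] {B : Matrix n n ℝ} (hB : B.IsHermitian)
include hB

lemma dotProduct_eq_sum_eigenvectorBasis (u w : n → ℝ) :
    u ⬝ᵥ w = ∑ i, (hB.eigenvectorBasis i ⬝ᵥ u) * (hB.eigenvectorBasis i ⬝ᵥ w) := by
  have := hB.eigenvectorBasis.sum_inner_mul_inner (WithLp.toLp 2 u) (WithLp.toLp 2 w)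
  simp only [EuclideanSpace.inner_eq_star_dotProduct, star_trivial] at this
  rw [dotProduct_comm u w, ← this]
  refine sum_congr rfl fun i _ => ?_
  rw [dotProduct_comm w]

lemma eigenvectorBasis_dotProduct_mulVec (i : n) (v : n → ℝ) :
    hB.eigenvectorBasis i ⬝ᵥ (B *ᵥ v) = hB.eigenvalues i * (hB.eigenvectorBasis i ⬝ᵥ v) := by
  have hsymm : ∀ x, x ᵥ* B = B *ᵥ x := fun x => by
    rw [← vecMul_transpose, ← conjTranspose_eq_transpose_of_trivial, hB.eq]
  rw [dotProduct_mulVec, hsymm, hB.mulVec_eigenvectorBasis, smul_dotProduct, smul_eq_mul]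

lemma mul_dotProduct_self_le_dotProduct_mulVec {lam : ℝ}
    (hlam : ∀ c ≠ 0, ∀ u ≠ 0, B *ᵥ u = c • u → lam ≤ c)
    {v : n → ℝ} (hv : ∀ w, B *ᵥ w = 0 → v ⬝ᵥ w = 0) :
    lam * (v ⬝ᵥ v) ≤ v ⬝ᵥ (B *ᵥ v) := by
  set e := hB.eigenvectorBasis
  rw [hB.dotProduct_eq_sum_eigenvectorBasis v v, hB.dotProduct_eq_sum_eigenvectorBasis v (B *ᵥ v),
    mul_sum]
  refine sum_le_sum fun i _ => ?_
  rw [hB.eigenvectorBasis_dotProduct_mulVec]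
  by_cases hμ : hB.eigenvalues i = 0
  · have hker : B *ᵥ ⇑(e i) = 0 := by simp [e, hB.mulVec_eigenvectorBasis, hμ]
    rw [dotProduct_comm, hv _ hker]
    simp
  · have he : (⇑(e i) : n → ℝ) ≠ 0 := fun h0 =>
      e.orthonormal.ne_zero i (by simpa using congrArg (WithLp.toLp 2) h0)
    have := hlam _ hμ _ he (hB.mulVec_eigenvectorBasis i)
    nlinarith [mul_self_nonneg (e i ⬝ᵥ v)]

end Matrix.IsHermitian

lemma Matrix.mul_dotProduct_self_le_mulVec_dotProduct_mulVec {m n : Type*} [Fintype m]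
    [Fintype n] [DecidableEq n] {A : Matrix m n ℝ} {lam : ℝ}
    (hlam : ∀ c ≠ 0, ∀ u ≠ 0, (Aᵀ * A) *ᵥ u = c • u → lam ≤ c)
    {v : n → ℝ} (hv : ∀ w, A *ᵥ w = 0 → v ⬝ᵥ w = 0) :
    lam * (v ⬝ᵥ v) ≤ (A *ᵥ v) ⬝ᵥ (A *ᵥ v) := by
  have hB : (Aᵀ * A).IsHermitian := by simpa using isHermitian_conjTranspose_mul_self A
  have hker : ∀ w, (Aᵀ * A) *ᵥ w = 0 → A *ᵥ w = 0 := fun w hw => by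
    simpa using (SetLike.ext_iff.mp (ker_mulVecLin_transpose_mul_self A) w).mp hw
  calc lam * (v ⬝ᵥ v) ≤ v ⬝ᵥ ((Aᵀ * A) *ᵥ v) :=
        hB.mul_dotProduct_self_le_dotProduct_mulVec hlam fun w hw => hv w (hker w hw)
    _ = (A *ᵥ v) ⬝ᵥ (A *ᵥ v) := by
        rw [← mulVec_mulVec, dotProduct_mulVec, vecMul_transpose]

theorem stmt0_general
    {m n : ℕ} (hm : 0 < m)
    (A : Matrix (Fin m) (Fin n) ℝ)
    (hrowsne : ∀ i, (fun t => A i t) ≠ 0)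
    (b : Fin m → ℝ)
    (proj : (Fin n → ℝ) → (Fin n → ℝ))
    (hproj : ∀ y : Fin n → ℝ, A.mulVec (proj y) = b ∧
      ∀ z : Fin n → ℝ, A.mulVec z = b →
        ∑ s, (y s - proj y s) ^ 2 ≤ ∑ s, (y s - z s) ^ 2)
    (lammin : ℝ)
    (hlammin : IsLeast
      {c : ℝ | c ≠ 0 ∧ ∃ v : Fin n → ℝ, v ≠ 0 ∧ (Aᵀ * A).mulVec v = c • v} lammin)
    (x : Fin n → ℝ)
    (xp : Fin m → Fin n → ℝ)
    (hxp : ∀ i s, xp i s = x s -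
      ((∑ t, A i t * x t) - b i) / (∑ t, (A i t) ^ 2) * A i s) :
    ∑ i, ((∑ t, (A i t) ^ 2) / (∑ i', ∑ t, (A i' t) ^ 2)) *
        (∑ s, (xp i s - proj (xp i) s) ^ 2)
      ≤ (1 - lammin / (∑ i', ∑ t, (A i' t) ^ 2)) *
        (∑ s, (x s - proj x s) ^ 2) := by
  have : Nonempty (Fin m) := Fin.pos_iff_nonempty.mp hm
  simp only [sum_sub_sq_eq_dotProduct_self] at hproj ⊢
  simp only [sum_sq_eq_dotProduct_self] at hxp ⊢
  have hstep : ∀ i, xp i = kaczmarzStep (A i) (b i) x := fun i => funext fun s => by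
    simp [hxp, kaczmarzStep, dotProduct]
  set e := x - proj x
  have hrow : ∀ i, (xp i - proj (xp i)) ⬝ᵥ (xp i - proj (xp i))
      ≤ e ⬝ᵥ e - (A *ᵥ e) i ^ 2 / (A i ⬝ᵥ A i) := fun i =>
    calc _ ≤ (xp i - proj x) ⬝ᵥ (xp i - proj x) := (hproj (xp i)).2 _ (hproj x).1
      _ = _ := by rw [hstep]; exact kaczmarzStep_sub_dotProduct_self (congrFun (hproj x).1 i)
  have hspec : lammin * (e ⬝ᵥ e) ≤ ∑ i, (A *ᵥ e) i ^ 2 := by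
    rw [sum_sq_eq_dotProduct_self]
    exact mul_dotProduct_self_le_mulVec_dotProduct_mulVec
      (fun c hc u hu h => hlammin.2 ⟨hc, u, hu, h⟩)
      fun w hw => sub_dotProduct_eq_zero_of_forall_solution_le (hproj x).1 (hproj x).2 hw
  have hN : ∀ i, 0 < A i ⬝ᵥ A i := fun i => dotProduct_self_pos (hrowsne i)
  have hF : 0 < ∑ i, A i ⬝ᵥ A i := sum_pos (fun i _ => hN i) univ_nonempty
  calc _ ≤ e ⬝ᵥ e - (∑ i, (A *ᵥ e) i ^ 2) / ∑ i, A i ⬝ᵥ A i :=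
        sum_div_sum_mul_le_of_le_sub_div hN hrow
    _ ≤ e ⬝ᵥ e - lammin * (e ⬝ᵥ e) / ∑ i, A i ⬝ᵥ A i := by gcongr
    _ = _ := by ring

theorem stmt0
    {m n : ℕ} (hm : 0 < m) (hn : 0 < n)
    (A : Matrix (Fin m) (Fin n) ℝ) (hA : A ≠ 0)
    (hrowsne : ∀ i, (fun t => A i t) ≠ 0)
    (b : Fin m → ℝ)
    (hconsistent : ∃ z : Fin n → ℝ, A.mulVec z = b)
    (proj : (Fin n → ℝ) → (Fin n → ℝ))
    (hproj : ∀ y : Fin n → ℝ, A.mulVec (proj y) = b ∧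
      ∀ z : Fin n → ℝ, A.mulVec z = b →
        ∑ s, (y s - proj y s) ^ 2 ≤ ∑ s, (y s - z s) ^ 2)
    (lammin : ℝ)
    (hlammin : IsLeast
      {c : ℝ | c ≠ 0 ∧ ∃ v : Fin n → ℝ, v ≠ 0 ∧ (Aᵀ * A).mulVec v = c • v} lammin)
    (x : Fin n → ℝ)
    (xp : Fin m → Fin n → ℝ)
    (hxp : ∀ i s, xp i s = x s -
      ((∑ t, A i t * x t) - b i) / (∑ t, (A i t) ^ 2) * A i s) :
    ∑ i, ((∑ t, (A i t) ^ 2) / (∑ i', ∑ t, (A i' t) ^ 2)) *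
        (∑ s, (xp i s - proj (xp i) s) ^ 2)
      ≤ (1 - lammin / (∑ i', ∑ t, (A i' t) ^ 2)) *
        (∑ s, (x s - proj x s) ^ 2) :=
  stmt0_general hm A hrowsne b proj hproj lammin hlammin x xp hxp
end

section
/- For every x ∈ ℝⁿ, ‖Ax − b‖² ≥ λ_min ‖x − x*‖², where x* is the Euclidean projection of x onto the solution set of Ax = b. -/
open Matrix Finset

/-!
Put `w = x - x*`. Since `x*` minimises the distance to `x` over the affine set `x* + ker A`, the
vector `w` is orthogonal to `ker A = ker AᵀA`. For an orthonormal eigenbasis `(vᵢ)` of `AᵀA` with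
eigenvalues `μᵢ` and `cᵢ = ⟪vᵢ, w⟫`, we get `‖Ax - b‖² = ‖Aw‖² = ∑ μᵢ cᵢ²` and `‖w‖² = ∑ cᵢ²`.
Orthogonality kills `cᵢ` whenever `μᵢ = 0`, and every other `μᵢ` is at least `λ_min`.
-/

variable {ι : Type*} [Fintype ι]

lemma sum_sub_sq_eq_dotProduct (u v : ι → ℝ) : ∑ i, (u i - v i) ^ 2 = (u - v) ⬝ᵥ (u - v) := by
  simp [dotProduct, sq]

lemma dotProduct_eq_zero_of_forall_dotProduct_self_le {w k : ι → ℝ}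
    (h : ∀ t : ℝ, w ⬝ᵥ w ≤ (w - t • k) ⬝ᵥ (w - t • k)) : w ⬝ᵥ k = 0 := by
  have expand (t : ℝ) : (w - t • k) ⬝ᵥ (w - t • k)
      = w ⬝ᵥ w - 2 * t * (w ⬝ᵥ k) + t ^ 2 * (k ⬝ᵥ k) := by
    simp only [sub_dotProduct, dotProduct_sub, smul_dotProduct, dotProduct_smul, smul_eq_mul,
      dotProduct_comm k w]
    ring
  have hK : 0 ≤ k ⬝ᵥ k := by simpa using dotProduct_star_self_nonneg k
  -- `t = s / (K + 1)` turns `h` into `0 ≤ -s² (K + 2) / (K + 1)²` with `s = w ⬝ᵥ k`, `K = k ⬝ᵥ k`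
  have ht := h (w ⬝ᵥ k / (k ⬝ᵥ k + 1))
  rw [expand] at ht
  field_simp at ht
  nlinarith [sq_nonneg (w ⬝ᵥ k)]

lemma sub_dotProduct_eq_zero_of_isMinOn {κ : Type*} {A : Matrix κ ι ℝ} {b : κ → ℝ}
    {x p : ι → ℝ} (hp : A *ᵥ p = b)
    (hmin : IsMinOn (fun z => (x - z) ⬝ᵥ (x - z)) {z | A *ᵥ z = b} p)
    {k : ι → ℝ} (hk : A *ᵥ k = 0) : (x - p) ⬝ᵥ k = 0 :=
  dotProduct_eq_zero_of_forall_dotProduct_self_le fun t => by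
    rw [sub_sub]
    exact hmin (show A *ᵥ (p + t • k) = b by simp [mulVec_add, mulVec_smul, hk, hp])

lemma dotProduct_transpose_mul_self_mulVec {κ : Type*} [Fintype κ] (A : Matrix κ ι ℝ)
    (w : ι → ℝ) : w ⬝ᵥ ((Aᵀ * A) *ᵥ w) = (A *ᵥ w) ⬝ᵥ (A *ᵥ w) := by
  rw [← mulVec_mulVec, dotProduct_mulVec, vecMul_transpose]

lemma OrthonormalBasis.sum_dotProduct_mul_dotProduct
    (B : OrthonormalBasis ι ℝ (EuclideanSpace ℝ ι)) (u v : ι → ℝ) :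
    ∑ i, (⇑(B i) ⬝ᵥ u) * (⇑(B i) ⬝ᵥ v) = u ⬝ᵥ v := by
  simpa [EuclideanSpace.inner_eq_star_dotProduct, dotProduct_comm] using
    B.sum_inner_mul_inner (WithLp.toLp 2 u) (WithLp.toLp 2 v)

namespace Matrix.IsHermitian

variable [DecidableEq ι] {M : Matrix ι ι ℝ}

lemma eigenvectorBasis_dotProduct_mulVec_s1 (hM : M.IsHermitian) (i : ι) (w : ι → ℝ) :
    ⇑(hM.eigenvectorBasis i) ⬝ᵥ (M *ᵥ w) = hM.eigenvalues i * (⇑(hM.eigenvectorBasis i) ⬝ᵥ w) := by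
  have hMT : Mᵀ = M := by simpa using hM.eq
  rw [← dotProduct_transpose_mulVec, hMT, mulVec_eigenvectorBasis, dotProduct_smul, smul_eq_mul,
    dotProduct_comm]

lemma dotProduct_mulVec_eq_sum (hM : M.IsHermitian) (w : ι → ℝ) :
    w ⬝ᵥ (M *ᵥ w) = ∑ i, hM.eigenvalues i * (⇑(hM.eigenvectorBasis i) ⬝ᵥ w) ^ 2 := by
  rw [← hM.eigenvectorBasis.sum_dotProduct_mul_dotProduct]
  refine sum_congr rfl fun i _ => ?_
  rw [hM.eigenvectorBasis_dotProduct_mulVec_s1]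
  ring

theorem mul_dotProduct_self_le_dotProduct_mulVec_s1 (hM : M.IsHermitian) {c : ℝ}
    (hc : c ∈ lowerBounds {μ : ℝ | μ ≠ 0 ∧ ∃ v : ι → ℝ, v ≠ 0 ∧ M *ᵥ v = μ • v})
    {w : ι → ℝ} (hw : ∀ k, M *ᵥ k = 0 → w ⬝ᵥ k = 0) :
    c * (w ⬝ᵥ w) ≤ w ⬝ᵥ (M *ᵥ w) := by
  rw [hM.dotProduct_mulVec_eq_sum, ← hM.eigenvectorBasis.sum_dotProduct_mul_dotProduct, mul_sum]
  refine sum_le_sum fun i _ => ?_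
  rw [← sq]
  by_cases hμ : hM.eigenvalues i = 0
  · have hker : M *ᵥ ⇑(hM.eigenvectorBasis i) = 0 := by
      rw [mulVec_eigenvectorBasis, hμ, zero_smul]
    rw [dotProduct_comm, hw _ hker, hμ]
    simp
  · have hv : ⇑(hM.eigenvectorBasis i) ≠ 0 := fun h0 =>
      hM.eigenvectorBasis.orthonormal.ne_zero i (by ext s; exact congrFun h0 s)
    exact mul_le_mul_of_nonneg_right (hc ⟨hμ, _, hv, hM.mulVec_eigenvectorBasis i⟩) (sq_nonneg _)

end Matrix.IsHermitian

theorem stmt1_general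
    {m n : ℕ}
    (A : Matrix (Fin m) (Fin n) ℝ)
    (b : Fin m → ℝ)
    (proj : (Fin n → ℝ) → (Fin n → ℝ))
    (hproj : ∀ y : Fin n → ℝ, A.mulVec (proj y) = b ∧
      ∀ z : Fin n → ℝ, A.mulVec z = b →
        ∑ s, (y s - proj y s) ^ 2 ≤ ∑ s, (y s - z s) ^ 2)
    (lammin : ℝ)
    (hlammin : IsLeast
      {c : ℝ | c ≠ 0 ∧ ∃ v : Fin n → ℝ, v ≠ 0 ∧ (Aᵀ * A).mulVec v = c • v} lammin)
    (x : Fin n → ℝ) :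
    lammin * ∑ s, (x s - proj x s) ^ 2 ≤ ∑ i, (A.mulVec x i - b i) ^ 2 := by
  obtain ⟨hp, hmin⟩ := hproj x
  have hAtA : (Aᵀ * A).IsHermitian := by simpa using isHermitian_conjTranspose_mul_self A
  have horth : ∀ k, (Aᵀ * A) *ᵥ k = 0 → (x - proj x) ⬝ᵥ k = 0 := fun k hk =>
    sub_dotProduct_eq_zero_of_isMinOn hp
      (fun z hz => by simpa only [Set.mem_ofPred_eq, sum_sub_sq_eq_dotProduct] using hmin z hz)
      ((conjTranspose_mul_self_mulVec_eq_zero A k).mp (by simpa using hk))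
  have key := hAtA.mul_dotProduct_self_le_dotProduct_mulVec_s1 hlammin.2 horth
  rwa [dotProduct_transpose_mul_self_mulVec, mulVec_sub, hp, ← sum_sub_sq_eq_dotProduct,
    ← sum_sub_sq_eq_dotProduct] at key

theorem stmt1
    {m n : ℕ} (hm : 0 < m) (hn : 0 < n)
    (A : Matrix (Fin m) (Fin n) ℝ) (hA : A ≠ 0)
    (b : Fin m → ℝ)
    (hconsistent : ∃ z : Fin n → ℝ, A.mulVec z = b)
    (proj : (Fin n → ℝ) → (Fin n → ℝ))
    (hproj : ∀ y : Fin n → ℝ, A.mulVec (proj y) = b ∧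
      ∀ z : Fin n → ℝ, A.mulVec z = b →
        ∑ s, (y s - proj y s) ^ 2 ≤ ∑ s, (y s - z s) ^ 2)
    (lammin : ℝ)
    (hlammin : IsLeast
      {c : ℝ | c ≠ 0 ∧ ∃ v : Fin n → ℝ, v ≠ 0 ∧ (Aᵀ * A).mulVec v = c • v} lammin)
    (x : Fin n → ℝ) :
    lammin * ∑ s, (x s - proj x s) ^ 2 ≤ ∑ i, (A.mulVec x i - b i) ^ 2 :=
  stmt1_general A b proj hproj lammin hlammin x
end

section
/- If every row of A has Euclidean norm 1, then the largest eigenvalue λ_max of AᵀA satisfies λ_max ≤ max_{i ∈ {1,…,m}} |{ j ∈ {1,…,m} : supp(a_i) ∩ supp(a_j) ≠ ∅ }| ≤ μν, where supp(a_i) is the set of indices of nonzero entries of row a_i, μ is the maximum number of nonzero entries in any row of A, and ν is the maximum number of nonzero entries in any column of A. -/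
open MeasureTheory ProbabilityTheory Matrix Finset
open scoped Classical

theorem stmt2
    {m n : ℕ} (hm : 0 < m) (hn : 0 < n)
    (A : Matrix (Fin m) (Fin n) ℝ)
    (hrows : ∀ i, ∑ t, (A i t) ^ 2 = 1)
    (lammax : ℝ)
    (hlammax : IsGreatest
      {c : ℝ | ∃ v : Fin n → ℝ, v ≠ 0 ∧ (Aᵀ * A).mulVec v = c • v} lammax) :
    lammax ≤ (((Finset.univ.sup fun i : Fin m =>
        (Finset.univ.filter fun j : Fin m =>
          ∃ t, A i t ≠ 0 ∧ A j t ≠ 0).card) : ℕ) : ℝ) ∧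
    (Finset.univ.sup fun i : Fin m =>
        (Finset.univ.filter fun j : Fin m => ∃ t, A i t ≠ 0 ∧ A j t ≠ 0).card)
      ≤ (Finset.univ.sup fun i : Fin m =>
          (Finset.univ.filter fun t : Fin n => A i t ≠ 0).card) *
        (Finset.univ.sup fun t : Fin n =>
          (Finset.univ.filter fun i : Fin m => A i t ≠ 0).card) := by
  have hrow_nz : ∀ i : Fin m, ∃ t, A i t ≠ 0 := by
    intro i
    by_contra h
    push_neg at h
    have := hrows i
    simp [h] at this
  constructor
  · -- Part 1
    obtain ⟨v, hv0, hveq⟩ := hlammax.1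
    by_cases hpos : lammax ≤ 0
    · have hD : 1 ≤ (Finset.univ.sup fun i : Fin m =>
          (Finset.univ.filter fun j : Fin m => ∃ t, A i t ≠ 0 ∧ A j t ≠ 0).card) := by
        obtain ⟨i⟩ : Nonempty (Fin m) := ⟨⟨0, hm⟩⟩
        refine le_trans ?_ (Finset.le_sup (Finset.mem_univ i))
        rw [Nat.one_le_iff_ne_zero, ← Nat.pos_iff_ne_zero, Finset.card_pos]
        obtain ⟨t, ht⟩ := hrow_nz i
        exact ⟨i, Finset.mem_filter.mpr ⟨Finset.mem_univ i, ⟨t, ht, ht⟩⟩⟩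
      calc lammax ≤ 0 := hpos
        _ ≤ _ := by exact_mod_cast Nat.zero_le _
    · push_neg at hpos
      set w := A.mulVec v with hw
      have hweq : (A * Aᵀ).mulVec w = lammax • w := by
        rw [hw, Matrix.mulVec_mulVec]
        have : A * Aᵀ * A = A * (Aᵀ * A) := Matrix.mul_assoc A Aᵀ A
        rw [this, ← Matrix.mulVec_mulVec, hveq, Matrix.mulVec_smul]
      have hw0 : w ≠ 0 := by
        intro h
        have h2 : (Aᵀ * A).mulVec v = 0 := by
          rw [← Matrix.mulVec_mulVec, ← hw, h, Matrix.mulVec_zero]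
        rw [hveq] at h2
        rcases smul_eq_zero.mp h2 with h3 | h3
        · exact absurd h3 (ne_of_gt hpos)
        · exact hv0 h3
      obtain ⟨i, -, hi⟩ := Finset.exists_max_image Finset.univ (fun i => |w i|)
        ⟨⟨0, hm⟩, Finset.mem_univ _⟩
      have hwi : 0 < |w i| := by
        obtain ⟨k, hk⟩ := Function.ne_iff.mp hw0
        exact lt_of_lt_of_le (abs_pos.mpr hk) (hi k (Finset.mem_univ k))
      have hG : ∀ j, |∑ t, A i t * A j t| ≤ 1 := by
        intro j
        have h2 := Finset.sum_mul_sq_le_sq_mul_sq Finset.univ (A i) (A j)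
        rw [hrows i, hrows j, one_mul] at h2
        exact (sq_le_one_iff_abs_le_one _).mp h2
      set S : Finset (Fin m) :=
        Finset.univ.filter fun j : Fin m => ∃ t, A i t ≠ 0 ∧ A j t ≠ 0 with hS
      have key : lammax * |w i| ≤ (S.card : ℝ) * |w i| := by
        have heig : ∑ j, (∑ t, A i t * A j t) * w j = lammax * w i := by
          have := congrFun hweq i
          simpa [Matrix.mulVec, dotProduct, Matrix.mul_apply,
            Matrix.transpose_apply] using this
        calc lammax * |w i| = |lammax * w i| := by
              rw [abs_mul, abs_of_pos hpos]
          _ = |∑ j, (∑ t, A i t * A j t) * w j| := by rw [heig]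
          _ ≤ ∑ j, |(∑ t, A i t * A j t) * w j| := Finset.abs_sum_le_sum_abs _ _
          _ = ∑ j ∈ S, |(∑ t, A i t * A j t) * w j| := by
              rw [← Finset.sum_filter_add_sum_filter_not Finset.univ
                (fun j => ∃ t, A i t ≠ 0 ∧ A j t ≠ 0)]
              have : ∑ j ∈ Finset.univ.filter
                  (fun j => ¬ ∃ t, A i t ≠ 0 ∧ A j t ≠ 0),
                  |(∑ t, A i t * A j t) * w j| = 0 := by
                apply Finset.sum_eq_zero
                intro j hj
                simp only [Finset.mem_filter] at hj
                push_neg at hj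
                have : ∑ t, A i t * A j t = 0 := by
                  apply Finset.sum_eq_zero
                  intro t _
                  by_cases h : A i t = 0
                  · simp [h]
                  · simp [hj.2 t h]
                simp [this]
              rw [this, add_zero]
          _ ≤ ∑ j ∈ S, |w i| := by
              apply Finset.sum_le_sum
              intro j _
              rw [abs_mul]
              calc |∑ t, A i t * A j t| * |w j| ≤ 1 * |w i| := by
                    apply mul_le_mul (hG j) (hi j (Finset.mem_univ j))
                      (abs_nonneg _) zero_le_one
                _ = |w i| := one_mul _
          _ = (S.card : ℝ) * |w i| := by rw [Finset.sum_const, nsmul_eq_mul]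
      have h1 : lammax ≤ (S.card : ℝ) := le_of_mul_le_mul_right key hwi
      refine le_trans h1 ?_
      exact_mod_cast Finset.le_sup (f := fun i : Fin m =>
        (Finset.univ.filter fun j : Fin m => ∃ t, A i t ≠ 0 ∧ A j t ≠ 0).card)
        (Finset.mem_univ i)
  · -- Part 2
    apply Finset.sup_le
    intro i _
    calc (Finset.univ.filter fun j : Fin m => ∃ t, A i t ≠ 0 ∧ A j t ≠ 0).card
        ≤ ((Finset.univ.filter fun t : Fin n => A i t ≠ 0).biUnion
            (fun t => Finset.univ.filter fun j : Fin m => A j t ≠ 0)).card := by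
          apply Finset.card_le_card
          intro j hj
          simp only [Finset.mem_filter, Finset.mem_univ, true_and] at hj
          obtain ⟨t, h1, h2⟩ := hj
          simp only [Finset.mem_biUnion, Finset.mem_filter, Finset.mem_univ, true_and]
          exact ⟨t, h1, h2⟩
      _ ≤ ∑ t ∈ Finset.univ.filter (fun t : Fin n => A i t ≠ 0),
            (Finset.univ.filter fun j : Fin m => A j t ≠ 0).card :=
          Finset.card_biUnion_le
      _ ≤ ∑ t ∈ Finset.univ.filter (fun t : Fin n => A i t ≠ 0),
            (Finset.univ.sup fun t : Fin n =>
              (Finset.univ.filter fun i : Fin m => A i t ≠ 0).card) :=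
          Finset.sum_le_sum fun t _ => Finset.le_sup (f := fun t : Fin n =>
            (Finset.univ.filter fun i : Fin m => A i t ≠ 0).card) (Finset.mem_univ t)
      _ = (Finset.univ.filter fun t : Fin n => A i t ≠ 0).card *
            (Finset.univ.sup fun t : Fin n =>
              (Finset.univ.filter fun i : Fin m => A i t ≠ 0).card) := by
          rw [Finset.sum_const, smul_eq_mul]
      _ ≤ _ := Nat.mul_le_mul (Finset.le_sup (f := fun i : Fin m =>
          (Finset.univ.filter fun t : Fin n => A i t ≠ 0).card)
          (Finset.mem_univ i)) le_rfl
end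

section
/- If every row of A has Euclidean norm 1, then for every i ∈ {1,…,m} and every t ∈ supp(a_i), ‖A θ_i P_t a_i‖ ≤ √ν · μ, where the norm on the left-hand side is the Euclidean norm of the vector A θ_i P_t a_i ∈ ℝ^m. Consequently α := max_{i, t ∈ supp(a_i)} ‖A θ_i P_t a_i‖ ≤ √ν · μ. -/
open MeasureTheory ProbabilityTheory Matrix Finset
open scoped Classical

theorem stmt3
    {m n : ℕ} (hm : 0 < m) (hn : 0 < n)
    (A : Matrix (Fin m) (Fin n) ℝ)
    (hrows : ∀ i, ∑ t, (A i t) ^ 2 = 1)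
    (θ : Fin m → ℕ)
    (hθ : ∀ i, θ i = (Finset.univ.filter (fun t => A i t ≠ 0)).card)
    (μ : ℕ) (hμ : IsGreatest (Set.range fun i => θ i) μ)
    (ν : ℕ) (hν : IsGreatest (Set.range fun t : Fin n =>
      (Finset.univ.filter (fun i : Fin m => A i t ≠ 0)).card) ν)
    (α : ℝ)
    (hα : IsGreatest {r : ℝ | ∃ i t, A i t ≠ 0 ∧
      r = Real.sqrt (∑ s, ((θ i : ℝ) * A s t * A i t) ^ 2)} α) :
    (∀ (i : Fin m) (t : Fin n), A i t ≠ 0 →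
      Real.sqrt (∑ s, ((θ i : ℝ) * A s t * A i t) ^ 2) ≤ Real.sqrt ν * μ) ∧
    α ≤ Real.sqrt ν * μ := by
  have hA2 : ∀ (i : Fin m) (t : Fin n), (A i t) ^ 2 ≤ 1 := by
    intro i t
    have h := Finset.single_le_sum (f := fun s => (A i s) ^ 2)
      (fun s _ => sq_nonneg _) (Finset.mem_univ t)
    rw [hrows i] at h
    exact h
  have hcol : ∀ t : Fin n, ∑ s, (A s t) ^ 2 ≤ (ν : ℝ) := by
    intro t
    have hsub : ∑ s, (A s t) ^ 2
        = ∑ s ∈ Finset.univ.filter (fun s : Fin m => A s t ≠ 0), (A s t) ^ 2 := by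
      rw [Finset.sum_filter]
      refine Finset.sum_congr rfl ?_
      intro s _
      by_cases h : A s t ≠ 0 <;> simp [h] <;> simpa using h
    have hcard : ((Finset.univ.filter (fun s : Fin m => A s t ≠ 0)).card : ℝ) ≤ (ν : ℝ) := by
      exact_mod_cast hν.2 ⟨t, rfl⟩
    calc ∑ s, (A s t) ^ 2
        = ∑ s ∈ Finset.univ.filter (fun s : Fin m => A s t ≠ 0), (A s t) ^ 2 := hsub
      _ ≤ ∑ _s ∈ Finset.univ.filter (fun s : Fin m => A s t ≠ 0), (1 : ℝ) :=
          Finset.sum_le_sum (fun s _ => hA2 s t)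
      _ = ((Finset.univ.filter (fun s : Fin m => A s t ≠ 0)).card : ℝ) := by simp
      _ ≤ (ν : ℝ) := hcard
  have hmain : ∀ (i : Fin m) (t : Fin n), A i t ≠ 0 →
      Real.sqrt (∑ s, ((θ i : ℝ) * A s t * A i t) ^ 2) ≤ Real.sqrt ν * μ := by
    intro i t _
    have hθμ : (θ i : ℝ) ≤ (μ : ℝ) := by exact_mod_cast hμ.2 ⟨i, rfl⟩
    have hsum : ∑ s, ((θ i : ℝ) * A s t * A i t) ^ 2
        = (θ i : ℝ) ^ 2 * (A i t) ^ 2 * ∑ s, (A s t) ^ 2 := by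
      rw [Finset.mul_sum]
      refine Finset.sum_congr rfl ?_
      intro s _; ring
    have hb : ∑ s, ((θ i : ℝ) * A s t * A i t) ^ 2 ≤ (ν : ℝ) * (μ : ℝ) ^ 2 := by
      rw [hsum]
      have h1 : (θ i : ℝ) ^ 2 * (A i t) ^ 2 ≤ (μ : ℝ) ^ 2 := by
        have := hA2 i t
        have h0 : (0:ℝ) ≤ (θ i : ℝ) := by positivity
        nlinarith [sq_nonneg (A i t), sq_nonneg ((θ i : ℝ))]
      have h2 : (0:ℝ) ≤ ∑ s, (A s t) ^ 2 := Finset.sum_nonneg fun s _ => sq_nonneg _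
      nlinarith [hcol t, sq_nonneg ((μ:ℝ))]
    calc Real.sqrt (∑ s, ((θ i : ℝ) * A s t * A i t) ^ 2)
        ≤ Real.sqrt ((ν : ℝ) * (μ : ℝ) ^ 2) := Real.sqrt_le_sqrt hb
      _ = Real.sqrt ν * μ := by
          rw [Real.sqrt_mul (by positivity), Real.sqrt_sq (by positivity)]
  refine ⟨hmain, ?_⟩
  obtain ⟨i, t, hit, hr⟩ := hα.1
  rw [hr]
  exact hmain i t hit
end

section
/- For every steplength γ > 0 and every j ≥ 0, the AsyRK iterates satisfy 𝔼(‖Ax_{j+1} − b‖²) ≤ 𝔼(‖Ax_j − b‖²) + (α²γ²/m) 𝔼(‖Ax_{k(j)} − b‖²) − (2γ/m) 𝔼(‖Aᵀ(Ax_{k(j)} − b)‖²) + (γ²λ_max²/m²) Σ_{d=k(j)}^{j−1} [ 𝔼(‖Ax_{k(d)} − b‖²) + 𝔼(‖Ax_{k(j)} − b‖²) ]. -/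
/-!
Write `r_d = A x_d - b` and `δ_d = A (x_d - x_{d+1})`, so that `r_{d+1} = r_d - δ_d` and
`‖r_{j+1}‖² = ‖r_j‖² - 2 ⟪r_j, δ_j⟫ + ‖δ_j‖²`. Averaged over the `j`-th sample alone, `δ_j` has mean
`(γ/m) A Aᵀ r_{k(j)}` and second moment at most `(α²γ²/m) ‖r_{k(j)}‖²`. The delay is absorbed by
telescoping, `r_j = r_{k(j)} - ∑_{d=k(j)}^{j-1} δ_d`, which leaves `‖Aᵀ r_{k(j)}‖²` and the cross terms
`⟪δ_d, A Aᵀ r_{k(j)}⟫`; averaged over the `d`-th sample these become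
`(γ/m) ⟪A Aᵀ r_{k(d)}, A Aᵀ r_{k(j)}⟫ ≤ (γ λ_max² / 2m) (‖r_{k(d)}‖² + ‖r_{k(j)}‖²)`.

Since the samples are i.i.d. with finitely many values, all expectations are finite sums over the
sample paths of length `j + 1`, and averaging over one sample is resampling one coordinate of the
path.
-/

open Matrix Finset MeasureTheory ProbabilityTheory

theorem le_add_div_two_of_sq_le_mul {t X Y : ℝ} (hX : 0 ≤ X) (hY : 0 ≤ Y) (h : t ^ 2 ≤ X * Y) :
    t ≤ (X + Y) / 2 := by
  nlinarith [sq_nonneg (X - Y), sq_nonneg (t - (X + Y) / 2)]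

theorem Matrix.IsHermitian.dotProduct_mulVec_le {ι : Type*} [Fintype ι] [DecidableEq ι]
    {M : Matrix ι ι ℝ} (hM : M.IsHermitian) {c : ℝ}
    (hc : ∀ μ, (∃ v, v ≠ 0 ∧ M *ᵥ v = μ • v) → μ ≤ c) (v : ι → ℝ) :
    v ⬝ᵥ M *ᵥ v ≤ c * (v ⬝ᵥ v) := by
  have hpsd : (algebraMap ℝ (Matrix ι ι ℝ) c - M).PosSemidef := by
    refine posSemidef_iff_isHermitian_and_spectrum_nonneg.2
      ⟨(IsSelfAdjoint.algebraMap _ (.all c)).sub hM, ?_⟩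
    rw [← spectrum.singleton_sub_eq]
    rintro _ ⟨_, rfl, μ, hμ, rfl⟩
    rw [← spectrum_toLin', ← Module.End.hasEigenvalue_iff_mem_spectrum] at hμ
    obtain ⟨v, hv⟩ := hμ.exists_hasEigenvector
    exact sub_nonneg.2 (hc μ ⟨v, hv.2, by simpa using hv.apply_eq_smul⟩)
  have hnonneg := hpsd.dotProduct_mulVec_nonneg v
  rw [sub_mulVec, dotProduct_sub, Algebra.algebraMap_eq_smul_one, smul_mulVec, one_mulVec,
    dotProduct_smul, star_trivial, smul_eq_mul] at hnonneg
  linarith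

section GramBounds
variable {ι κ : Type*} [Fintype ι] [Fintype κ]

theorem dotProduct_self_nonneg_real (v : ι → ℝ) : 0 ≤ v ⬝ᵥ v := by
  simpa using dotProduct_star_self_nonneg v

theorem sq_dotProduct_le_real (u v : ι → ℝ) : (u ⬝ᵥ v) ^ 2 ≤ (u ⬝ᵥ u) * (v ⬝ᵥ v) := by
  simpa only [dotProduct, sq] using sum_mul_sq_le_sq_mul_sq univ u v

variable (A : Matrix ι κ ℝ) {lam : ℝ}

theorem mulVec_dotProduct_mulVec (v w : κ → ℝ) : A *ᵥ v ⬝ᵥ A *ᵥ w = v ⬝ᵥ (Aᵀ * A) *ᵥ w := by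
  rw [← mulVec_mulVec, dotProduct_mulVec v Aᵀ, vecMul_transpose]

theorem nonneg_of_transpose_mul_self_mulVec_eq_smul {v : κ → ℝ} (hv : v ≠ 0)
    (hAv : (Aᵀ * A) *ᵥ v = lam • v) : 0 ≤ lam := by
  have hpos : 0 < v ⬝ᵥ v := by simpa using dotProduct_star_self_pos_iff.2 hv
  have : lam * (v ⬝ᵥ v) = A *ᵥ v ⬝ᵥ A *ᵥ v := by
    rw [mulVec_dotProduct_mulVec, hAv, dotProduct_smul, smul_eq_mul]
  exact nonneg_of_mul_nonneg_left (this ▸ dotProduct_self_nonneg_real _) hpos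

variable [DecidableEq κ] (hlam : ∀ μ, (∃ v, v ≠ 0 ∧ (Aᵀ * A) *ᵥ v = μ • v) → μ ≤ lam)
include hlam

theorem mulVec_dotProduct_self_le (v : κ → ℝ) : A *ᵥ v ⬝ᵥ A *ᵥ v ≤ lam * (v ⬝ᵥ v) := by
  have hA : (Aᵀ * A).IsHermitian := by
    simpa [conjTranspose_eq_transpose_of_trivial] using isHermitian_conjTranspose_mul_self A
  rw [mulVec_dotProduct_mulVec]
  exact hA.dotProduct_mulVec_le hlam v

theorem transpose_mulVec_dotProduct_self_le (hlam0 : 0 ≤ lam) (z : ι → ℝ) :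
    Aᵀ *ᵥ z ⬝ᵥ Aᵀ *ᵥ z ≤ lam * (z ⬝ᵥ z) := by
  set y := Aᵀ *ᵥ z
  have hsq : (y ⬝ᵥ y) ^ 2 ≤ lam * (y ⬝ᵥ y) * (z ⬝ᵥ z) :=
    calc (y ⬝ᵥ y) ^ 2 = (A *ᵥ y ⬝ᵥ z) ^ 2 := by
          rw [← vecMul_transpose, ← dotProduct_mulVec]
      _ ≤ (A *ᵥ y ⬝ᵥ A *ᵥ y) * (z ⬝ᵥ z) := sq_dotProduct_le_real _ _
      _ ≤ lam * (y ⬝ᵥ y) * (z ⬝ᵥ z) := mul_le_mul_of_nonneg_right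
        (mulVec_dotProduct_self_le A hlam y) (dotProduct_self_nonneg_real z)
  nlinarith [mul_nonneg hlam0 (dotProduct_self_nonneg_real z), dotProduct_self_nonneg_real y]

theorem mulVec_transpose_mulVec_dotProduct_le (hlam0 : 0 ≤ lam) (a c : ι → ℝ) :
    A *ᵥ Aᵀ *ᵥ a ⬝ᵥ A *ᵥ Aᵀ *ᵥ c ≤ lam ^ 2 / 2 * (a ⬝ᵥ a + c ⬝ᵥ c) := by
  have hsq : ∀ v, A *ᵥ Aᵀ *ᵥ v ⬝ᵥ A *ᵥ Aᵀ *ᵥ v ≤ lam ^ 2 * (v ⬝ᵥ v) := fun v =>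
    calc _ ≤ lam * (Aᵀ *ᵥ v ⬝ᵥ Aᵀ *ᵥ v) := mulVec_dotProduct_self_le A hlam _
      _ ≤ lam * (lam * (v ⬝ᵥ v)) :=
          mul_le_mul_of_nonneg_left (transpose_mulVec_dotProduct_self_le A hlam hlam0 v) hlam0
      _ = lam ^ 2 * (v ⬝ᵥ v) := by ring
  have ha := mul_nonneg (sq_nonneg lam) (dotProduct_self_nonneg_real a)
  have hc := mul_nonneg (sq_nonneg lam) (dotProduct_self_nonneg_real c)
  have := le_add_div_two_of_sq_le_mul ha hc ((sq_dotProduct_le_real _ _).trans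
    (mul_le_mul (hsq a) (hsq c) (dotProduct_self_nonneg_real _) ha))
  linarith

end GramBounds

section PathExpectation
variable {S : Type*}

theorem prod_update_mul_apply {ι : Type*} [Fintype ι] [DecidableEq ι] (q : S → ℝ) (z : ι → S)
    (i : ι) (p : S) : (∏ r, q (Function.update z i p r)) * q (z i) = (∏ r, q (z r)) * q p := by
  rw [Fintype.prod_eq_mul_prod_subtype_ne _ i,
    Fintype.prod_eq_mul_prod_subtype_ne (fun r => q (z r)) i, Function.update_self,
    prod_congr rfl fun r _ => by rw [Function.update_of_ne r.2]]
  ring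

theorem sum_prod_mul_sum_update_eq [Fintype S] {ι : Type*} [Fintype ι] [DecidableEq ι]
    {q : S → ℝ} (hq : ∑ p, q p = 1) (i : ι) (F : (ι → S) → ℝ) :
    ∑ z, (∏ r, q (z r)) * ∑ p, q p * F (Function.update z i p) = ∑ z, (∏ r, q (z r)) * F z := by
  -- `(z, p) ↦ (update z i p, z i)` is an involution of `(ι → S) × S` preserving the weights
  have σ : Function.Involutive fun zp : (ι → S) × S => (Function.update zp.1 i zp.2, zp.1 i) := by
    rintro ⟨z, p⟩; simp
  calc ∑ z, (∏ r, q (z r)) * ∑ p, q p * F (Function.update z i p)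
      = ∑ zp : (ι → S) × S, (∏ r, q (zp.1 r)) * q zp.2 * F (Function.update zp.1 i zp.2) := by
        rw [Fintype.sum_prod_type]; simp only [mul_sum, mul_assoc]
    _ = ∑ zp : (ι → S) × S, (∏ r, q (zp.1 r)) * q zp.2 * F zp.1 := by
        rw [← Equiv.sum_comp (σ.toPerm _)]
        refine Fintype.sum_congr _ _ fun ⟨z, p⟩ => ?_
        simp [prod_update_mul_apply]
    _ = ∑ z, (∏ r, q (z r)) * F z := by
        rw [Fintype.sum_prod_type]
        refine Fintype.sum_congr _ _ fun z => ?_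
        simp only [mul_right_comm _ _ (F z), ← mul_sum, hq, mul_one]

variable [Inhabited S]

def extendPath {N : ℕ} (z : Fin N → S) : ℕ → S :=
  fun r => if h : r < N then z ⟨r, h⟩ else default

theorem extendPath_update {N : ℕ} (z : Fin N → S) (i : Fin N) (p : S) :
    extendPath (Function.update z i p) = Function.update (extendPath z) i p := by
  funext r
  by_cases hr : r < N
  · by_cases hri : r = i
    · subst hri; simp [extendPath]
    · have hri' : (⟨r, hr⟩ : Fin N) ≠ i := fun h => hri (congrArg Fin.val h)
      simp [extendPath, hr, hri, Function.update_of_ne hri']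
  · simp [extendPath, hr, show r ≠ i from fun h => hr (h ▸ i.2)]

variable [Fintype S]

/-- The expectation of `F` under i.i.d. sampling from `q`; meaningful only when `F z` depends on
`z 0, …, z (N - 1)` alone. -/
def pathExpect (q : S → ℝ) (N : ℕ) (F : (ℕ → S) → ℝ) : ℝ :=
  ∑ z : Fin N → S, (∏ r, q (z r)) * F (extendPath z)

variable {q : S → ℝ} {N : ℕ}

theorem pathExpect_add (F G : (ℕ → S) → ℝ) :
    pathExpect q N (fun z => F z + G z) = pathExpect q N F + pathExpect q N G := by
  simp only [pathExpect, mul_add, sum_add_distrib]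

theorem pathExpect_sub (F G : (ℕ → S) → ℝ) :
    pathExpect q N (fun z => F z - G z) = pathExpect q N F - pathExpect q N G := by
  simp only [pathExpect, mul_sub, sum_sub_distrib]

theorem pathExpect_const_mul (c : ℝ) (F : (ℕ → S) → ℝ) :
    pathExpect q N (fun z => c * F z) = c * pathExpect q N F := by
  simp only [pathExpect, mul_sum, mul_left_comm c]

theorem pathExpect_sum {ι : Type*} (s : Finset ι) (F : ι → (ℕ → S) → ℝ) :
    pathExpect q N (fun z => ∑ i ∈ s, F i z) = ∑ i ∈ s, pathExpect q N (F i) := by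
  simp only [pathExpect, mul_sum]
  exact sum_comm

theorem pathExpect_mono (hq : ∀ p, 0 ≤ q p) {F G : (ℕ → S) → ℝ} (h : ∀ z, F z ≤ G z) :
    pathExpect q N F ≤ pathExpect q N G :=
  sum_le_sum fun _ _ => mul_le_mul_of_nonneg_left (h _) (prod_nonneg fun _ _ => hq _)

theorem pathExpect_sum_update (hq : ∑ p, q p = 1) {d : ℕ} (hd : d < N) (F : (ℕ → S) → ℝ) :
    pathExpect q N (fun z => ∑ p, q p * F (Function.update z d p)) = pathExpect q N F := by
  have := sum_prod_mul_sum_update_eq hq ⟨d, hd⟩ (fun z => F (extendPath z))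
  simpa only [pathExpect, extendPath_update] using this

theorem integral_comp_eq_pathExpect {Ω : Type*} [MeasurableSpace Ω] {P : Measure Ω}
    [IsProbabilityMeasure P] [MeasurableSpace S] [MeasurableSingletonClass S] {Z : ℕ → Ω → S}
    (hZ : ∀ r, Measurable (Z r)) (hind : iIndepFun Z P)
    (hlaw : ∀ r p, P.real (Z r ⁻¹' {p}) = q p) {F : (ℕ → S) → ℝ}
    (hF : ∀ z z', (∀ r < N, z r = z' r) → F z = F z') :
    ∫ ω, F (fun r => Z r ω) ∂P = pathExpect q N F := by
  set W : Ω → Fin N → S := fun ω r => Z r ω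
  have hW : Measurable W := measurable_pi_lambda _ fun r => hZ r
  have hlawW : ∀ z, (P.map W).real {z} = ∏ r, q (z r) := by
    intro z
    have hpre : W ⁻¹' {z} = ⋂ r : Fin N, Z r ⁻¹' {z r} := by
      ext ω; simp [W, funext_iff]
    rw [map_measureReal_apply hW (measurableSet_singleton z), hpre, measureReal_def,
      (hind.precomp Fin.val_injective).meas_iInter
        fun r => ⟨{z r}, measurableSet_singleton _, rfl⟩,
      ENNReal.toReal_prod]
    exact prod_congr rfl fun r _ => hlaw r (z r)
  have hFW : ∀ ω, F (fun r => Z r ω) = F (extendPath (W ω)) :=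
    fun ω => hF _ _ fun r hr => by simp [extendPath, W, hr]
  simp_rw [hFW]
  rw [← integral_map (f := fun z => F (extendPath z)) hW.aemeasurable
    (measurable_of_countable _).aestronglyMeasurable, integral_fintype .of_finite]
  simp [pathExpect, hlawW]

end PathExpectation

section RandomizedKaczmarz
variable {m n : ℕ} (A : Matrix (Fin m) (Fin n) ℝ) (θ : Fin m → ℕ)

/-- The probability of sampling `p = (i, t)`: the row `i` uniformly, then the column `t` uniformly
in the support of row `i`, which has `θ i` elements. -/
noncomputable def rkProb (p : Fin m × Fin n) : ℝ :=
  if A p.1 p.2 ≠ 0 then ((m : ℝ) * θ p.1)⁻¹ else 0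

/-- The step `γ θ_i P_t a_i r_i` at the sampled pair `p = (i, t)`, for the residual `r`. -/
def rkStep (γ : ℝ) (p : Fin m × Fin n) (r : Fin m → ℝ) : Fin n → ℝ :=
  Pi.single p.2 (γ * θ p.1 * A p.1 p.2 * r p.1)

theorem rkProb_nonneg (p : Fin m × Fin n) : 0 ≤ rkProb A θ p := by
  unfold rkProb; split_ifs <;> positivity

section Sampling
variable {A θ} (hθ : ∀ i, θ i = #{t | A i t ≠ 0})
include hθ

theorem rkProb_mul_mul_eq (p : Fin m × Fin n) :
    rkProb A θ p * θ p.1 * A p.1 p.2 = A p.1 p.2 / m := by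
  by_cases h : A p.1 p.2 = 0
  · simp [h]
  · have hθ0 : (θ p.1 : ℝ) ≠ 0 := by
      rw [hθ, Nat.cast_ne_zero, ← pos_iff_ne_zero, card_pos]
      exact ⟨p.2, by simpa using h⟩
    rw [rkProb, if_pos h]
    field_simp

theorem sum_rkProb_row_le (i : Fin m) : ∑ t, rkProb A θ (i, t) ≤ (m : ℝ)⁻¹ := by
  simp only [rkProb, sum_ite, sum_const_zero, add_zero, sum_const, nsmul_eq_mul, ← hθ i]
  rcases eq_or_ne (θ i : ℝ) 0 with h | h
  · simp [h]
  · rw [mul_inv, mul_left_comm, mul_inv_cancel₀ h, mul_one]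

theorem sum_rkProb_mul_dotProduct_mulVec_rkStep (γ : ℝ) (v r : Fin m → ℝ) :
    ∑ p, rkProb A θ p * (v ⬝ᵥ A *ᵥ rkStep A θ γ p r) = γ / m * (v ⬝ᵥ A *ᵥ Aᵀ *ᵥ r) := by
  have hterm : ∀ p : Fin m × Fin n, rkProb A θ p * (v ⬝ᵥ A *ᵥ rkStep A θ γ p r)
      = γ / m * ((v ᵥ* A) p.2 * (A p.1 p.2 * r p.1)) := by
    intro p
    rw [dotProduct_mulVec, rkStep, dotProduct_single]
    linear_combination (γ * (v ᵥ* A) p.2 * r p.1) * rkProb_mul_mul_eq hθ p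
  rw [sum_congr rfl fun p _ => hterm p, ← mul_sum, dotProduct_mulVec, mulVec_transpose,
    Fintype.sum_prod_type_right]
  refine congrArg _ (sum_congr rfl fun t _ => ?_)
  simp only [vecMul, dotProduct, mul_sum, mul_comm (r _)]

theorem sum_rkProb_mul_mulVec_rkStep_dotProduct_self_le {α : ℝ}
    (hα : ∀ i t, A i t ≠ 0 → ∑ s, ((θ i : ℝ) * A s t * A i t) ^ 2 ≤ α ^ 2) (γ : ℝ)
    (r : Fin m → ℝ) :
    ∑ p, rkProb A θ p * (A *ᵥ rkStep A θ γ p r ⬝ᵥ A *ᵥ rkStep A θ γ p r)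
      ≤ α ^ 2 * γ ^ 2 / m * (r ⬝ᵥ r) := by
  have hterm : ∀ p : Fin m × Fin n,
      rkProb A θ p * (A *ᵥ rkStep A θ γ p r ⬝ᵥ A *ᵥ rkStep A θ γ p r)
        ≤ rkProb A θ p * (α ^ 2 * γ ^ 2 * r p.1 ^ 2) := by
    rintro ⟨i, t⟩
    by_cases h : A i t = 0
    · simp [rkProb, h]
    refine mul_le_mul_of_nonneg_left ?_ (rkProb_nonneg A θ _)
    have hnorm : A *ᵥ rkStep A θ γ (i, t) r ⬝ᵥ A *ᵥ rkStep A θ γ (i, t) r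
        = γ ^ 2 * r i ^ 2 * ∑ s, ((θ i : ℝ) * A s t * A i t) ^ 2 := by
      have hcol : ∀ s, (A *ᵥ rkStep A θ γ (i, t) r) s = A s t * (γ * θ i * A i t * r i) :=
        fun s => dotProduct_single _ _ _
      simp only [dotProduct, hcol, mul_sum]
      exact sum_congr rfl fun s _ => by ring
    rw [hnorm]
    nlinarith [hα i t h, sq_nonneg (γ * r i)]
  calc _ ≤ ∑ p, rkProb A θ p * (α ^ 2 * γ ^ 2 * r p.1 ^ 2) := sum_le_sum fun p _ => hterm p
    _ = ∑ i, (∑ t, rkProb A θ (i, t)) * (α ^ 2 * γ ^ 2 * r i ^ 2) := by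
        rw [Fintype.sum_prod_type]; simp only [sum_mul]
    _ ≤ ∑ i, (m : ℝ)⁻¹ * (α ^ 2 * γ ^ 2 * r i ^ 2) :=
        sum_le_sum fun i _ => mul_le_mul_of_nonneg_right (sum_rkProb_row_le hθ i) (by positivity)
    _ = α ^ 2 * γ ^ 2 / m * (r ⬝ᵥ r) := by
        simp only [dotProduct, mul_sum, ← sq]
        exact sum_congr rfl fun i _ => by ring

end Sampling

section Iterates
variable (b : Fin m → ℝ) (γ : ℝ) {k : ℕ → ℕ}

/-- The AsyRK iterates driven by a fixed sequence `z` of sampled pairs. -/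
def asyRK (hk : ∀ j, k j ≤ j) (x₀ : Fin n → ℝ) : ℕ → (ℕ → Fin m × Fin n) → Fin n → ℝ
  | 0, _ => x₀
  | d + 1, z => asyRK hk x₀ d z - rkStep A θ γ (z d) (A *ᵥ asyRK hk x₀ (k d) z - b)
decreasing_by
  · omega
  · exact Nat.lt_succ_of_le (hk d)

variable (hk : ∀ j, k j ≤ j) (x₀ : Fin n → ℝ)

def asyResidual (d : ℕ) (z : ℕ → Fin m × Fin n) : Fin m → ℝ :=
  A *ᵥ asyRK A θ b γ hk x₀ d z - b

local notation "xK" => asyRK A θ b γ hk x₀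
local notation "rK" => asyResidual A θ b γ hk x₀

theorem asyRK_succ (d : ℕ) (z : ℕ → Fin m × Fin n) :
    xK (d + 1) z = xK d z - rkStep A θ γ (z d) (rK (k d) z) := by
  rw [asyRK]; rfl

theorem asyRK_congr {d : ℕ} {z z' : ℕ → Fin m × Fin n} (h : ∀ r < d, z r = z' r) :
    xK d z = xK d z' := by
  induction d using Nat.strong_induction_on generalizing z z' with
  | _ d ih =>
    cases d with
    | zero => simp [asyRK]
    | succ d =>
      rw [asyRK_succ, asyRK_succ, asyResidual, asyResidual,
        ih d (by omega) fun r hr => h r (by omega),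
        ih (k d) (Nat.lt_succ_of_le (hk d)) fun r hr => h r (by have := hk d; omega),
        h d (by omega)]

theorem integral_comp_asyRK_eq_pathExpect [Inhabited (Fin m × Fin n)] {Ω : Type*}
    [MeasurableSpace Ω] {P : Measure Ω} [IsProbabilityMeasure P] {Z : ℕ → Ω → Fin m × Fin n}
    (hZ : ∀ r, Measurable (Z r)) (hind : iIndepFun Z P)
    (hlaw : ∀ r p, P.real (Z r ⁻¹' {p}) = rkProb A θ p) {d N : ℕ} (hd : d ≤ N)
    (f : (Fin n → ℝ) → ℝ) :
    ∫ ω, f (xK d fun r => Z r ω) ∂P = pathExpect (rkProb A θ) N fun z => f (xK d z) :=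
  integral_comp_eq_pathExpect (F := fun z => f (xK d z)) hZ hind hlaw fun _ _ h => by
    rw [asyRK_congr A θ b γ hk x₀ fun r hr => h r (by omega)]

theorem eq_asyRK {x : ℕ → Fin n → ℝ} {z : ℕ → Fin m × Fin n} (h0 : x 0 = x₀)
    (hsucc : ∀ d, x (d + 1) = x d - rkStep A θ γ (z d) (A *ᵥ x (k d) - b)) (d : ℕ) :
    x d = xK d z := by
  induction d using Nat.strong_induction_on with
  | _ d ih =>
    cases d with
    | zero => rw [h0, asyRK]
    | succ d =>
      rw [hsucc, asyRK_succ, asyResidual, ih d (by omega), ih (k d) (Nat.lt_succ_of_le (hk d))]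

theorem asyResidual_update {c d : ℕ} (hcd : c ≤ d) (z : ℕ → Fin m × Fin n)
    (p : Fin m × Fin n) : rK c (Function.update z d p) = rK c z := by
  rw [asyResidual, asyResidual, asyRK_congr]
  exact fun r hr => Function.update_of_ne (by omega) _ _

theorem asyResidual_succ (d : ℕ) (z : ℕ → Fin m × Fin n) :
    rK (d + 1) z = rK d z - A *ᵥ rkStep A θ γ (z d) (rK (k d) z) := by
  change A *ᵥ xK (d + 1) z - b = (A *ᵥ xK d z - b) - _
  rw [asyRK_succ, mulVec_sub]; abel

theorem asyResidual_eq_sub_sum {c d : ℕ} (hcd : c ≤ d) (z : ℕ → Fin m × Fin n) :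
    rK d z = rK c z - ∑ e ∈ Ico c d, A *ᵥ rkStep A θ γ (z e) (rK (k e) z) := by
  induction d, hcd using Nat.le_induction with
  | base => simp
  | succ d hcd ih => rw [asyResidual_succ, ih, sum_Ico_succ_top hcd]; abel

end Iterates

section Expectation
variable {A θ} (hθ : ∀ i, θ i = #{t | A i t ≠ 0}) (hq : ∑ p, rkProb A θ p = 1)
  (b : Fin m → ℝ) (γ : ℝ) {k : ℕ → ℕ} (hk : ∀ j, k j ≤ j) (x₀ : Fin n → ℝ)
  [Inhabited (Fin m × Fin n)] {N : ℕ}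
include hθ hq

local notation "rK" => asyResidual A θ b γ hk x₀
local notation "E" => pathExpect (rkProb A θ) N

theorem pathExpect_dotProduct_mulVec_rkStep {d : ℕ} (hd : d < N)
    {V : (ℕ → Fin m × Fin n) → Fin m → ℝ} (hV : ∀ z p, V (Function.update z d p) = V z) :
    E (fun z => V z ⬝ᵥ A *ᵥ rkStep A θ γ (z d) (rK (k d) z))
      = γ / m * E (fun z => V z ⬝ᵥ A *ᵥ Aᵀ *ᵥ rK (k d) z) := by
  rw [← pathExpect_sum_update hq hd, ← pathExpect_const_mul]
  congr 1; funext z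
  simp only [Function.update_self, hV, asyResidual_update A θ b γ hk x₀ (hk d)]
  exact sum_rkProb_mul_dotProduct_mulVec_rkStep hθ γ _ _

theorem pathExpect_mulVec_rkStep_dotProduct_self_le {α : ℝ}
    (hα : ∀ i t, A i t ≠ 0 → ∑ s, ((θ i : ℝ) * A s t * A i t) ^ 2 ≤ α ^ 2) {d : ℕ} (hd : d < N) :
    E (fun z => A *ᵥ rkStep A θ γ (z d) (rK (k d) z) ⬝ᵥ A *ᵥ rkStep A θ γ (z d) (rK (k d) z))
      ≤ α ^ 2 * γ ^ 2 / m * E (fun z => rK (k d) z ⬝ᵥ rK (k d) z) := by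
  rw [← pathExpect_sum_update hq hd, ← pathExpect_const_mul]
  refine pathExpect_mono (rkProb_nonneg A θ) fun z => ?_
  simp only [Function.update_self, asyResidual_update A θ b γ hk x₀ (hk d)]
  exact sum_rkProb_mul_mulVec_rkStep_dotProduct_self_le hθ hα γ _

theorem pathExpect_delayed_dotProduct_mulVec_rkStep_le (hγ : 0 ≤ γ) {lam : ℝ} (hlam0 : 0 ≤ lam)
    (hlam : ∀ μ, (∃ v, v ≠ 0 ∧ (Aᵀ * A) *ᵥ v = μ • v) → μ ≤ lam) {c d : ℕ} (hcd : c ≤ d)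
    (hd : d < N) :
    E (fun z => A *ᵥ Aᵀ *ᵥ rK c z ⬝ᵥ A *ᵥ rkStep A θ γ (z d) (rK (k d) z))
      ≤ γ / m * (lam ^ 2 / 2 *
          (E (fun z => rK (k d) z ⬝ᵥ rK (k d) z) + E (fun z => rK c z ⬝ᵥ rK c z))) := by
  rw [pathExpect_dotProduct_mulVec_rkStep hθ hq b γ hk x₀ hd
    fun z p => by rw [asyResidual_update A θ b γ hk x₀ hcd]]
  refine mul_le_mul_of_nonneg_left ?_ (by positivity)
  rw [← pathExpect_add, ← pathExpect_const_mul]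
  refine pathExpect_mono (rkProb_nonneg A θ) fun z => ?_
  rw [add_comm]
  exact mulVec_transpose_mulVec_dotProduct_le A hlam hlam0 _ _

theorem pathExpect_asyResidual_succ_le (hγ : 0 ≤ γ) {α lam : ℝ}
    (hα : ∀ i t, A i t ≠ 0 → ∑ s, ((θ i : ℝ) * A s t * A i t) ^ 2 ≤ α ^ 2) (hlam0 : 0 ≤ lam)
    (hlam : ∀ μ, (∃ v, v ≠ 0 ∧ (Aᵀ * A) *ᵥ v = μ • v) → μ ≤ lam) {j : ℕ} (hj : j < N) :
    E (fun z => rK (j + 1) z ⬝ᵥ rK (j + 1) z) ≤ E (fun z => rK j z ⬝ᵥ rK j z)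
      + α ^ 2 * γ ^ 2 / m * E (fun z => rK (k j) z ⬝ᵥ rK (k j) z)
      - 2 * γ / m * E (fun z => Aᵀ *ᵥ rK (k j) z ⬝ᵥ Aᵀ *ᵥ rK (k j) z)
      + γ ^ 2 * lam ^ 2 / m ^ 2 * ∑ d ∈ Ico (k j) j,
          (E (fun z => rK (k d) z ⬝ᵥ rK (k d) z) + E (fun z => rK (k j) z ⬝ᵥ rK (k j) z)) := by
  set δ := fun d z => A *ᵥ rkStep A θ γ (z d) (rK (k d) z)
  set g := fun z => A *ᵥ Aᵀ *ᵥ rK (k j) z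
  have hexpand : E (fun z => rK (j + 1) z ⬝ᵥ rK (j + 1) z) = E (fun z => rK j z ⬝ᵥ rK j z)
      - 2 * E (fun z => rK j z ⬝ᵥ δ j z) + E (fun z => δ j z ⬝ᵥ δ j z) := by
    rw [← pathExpect_const_mul, ← pathExpect_sub, ← pathExpect_add]
    congr 1; funext z
    rw [asyResidual_succ]
    simp only [sub_dotProduct, dotProduct_sub, dotProduct_comm (δ j z), δ]
    ring
  have hmean : E (fun z => rK j z ⬝ᵥ δ j z) = γ / m * (E (fun z => Aᵀ *ᵥ rK (k j) z ⬝ᵥ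
      Aᵀ *ᵥ rK (k j) z) - ∑ d ∈ Ico (k j) j, E (fun z => g z ⬝ᵥ δ d z)) := by
    rw [pathExpect_dotProduct_mulVec_rkStep hθ hq b γ hk x₀ hj
      (asyResidual_update A θ b γ hk x₀ le_rfl), ← pathExpect_sum, ← pathExpect_sub]
    congr 2; funext z
    rw [asyResidual_eq_sub_sum A θ b γ hk x₀ (hk j) z, sub_dotProduct, sum_dotProduct,
      dotProduct_mulVec (rK (k j) z) A, ← mulVec_transpose]
    simp only [g, δ, dotProduct_comm (A *ᵥ Aᵀ *ᵥ rK (k j) z)]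
  have hdelay : 2 * γ / m * ∑ d ∈ Ico (k j) j, E (fun z => g z ⬝ᵥ δ d z)
      ≤ γ ^ 2 * lam ^ 2 / m ^ 2 * ∑ d ∈ Ico (k j) j,
          (E (fun z => rK (k d) z ⬝ᵥ rK (k d) z) + E (fun z => rK (k j) z ⬝ᵥ rK (k j) z)) := by
    rw [mul_sum, mul_sum]
    refine sum_le_sum fun d hd => ?_
    obtain ⟨hkd, hdj⟩ := mem_Ico.1 hd
    calc _ ≤ 2 * γ / m * (γ / m * (lam ^ 2 / 2 * (E (fun z => rK (k d) z ⬝ᵥ rK (k d) z)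
          + E (fun z => rK (k j) z ⬝ᵥ rK (k j) z)))) :=
          mul_le_mul_of_nonneg_left (pathExpect_delayed_dotProduct_mulVec_rkStep_le hθ hq b γ hk
            x₀ hγ hlam0 hlam hkd (hdj.trans hj)) (by positivity)
      _ = _ := by ring
  rw [hexpand, hmean]
  linear_combination pathExpect_mulVec_rkStep_dotProduct_self_le hθ hq b γ hk x₀ hα hj + hdelay

end Expectation

end RandomizedKaczmarz

open scoped Classical

theorem stmt10_general
    {m n : ℕ}
    (A : Matrix (Fin m) (Fin n) ℝ) (b : Fin m → ℝ)
    (θ : Fin m → ℕ)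
    (hθ : ∀ i, θ i = (Finset.univ.filter (fun t => A i t ≠ 0)).card)
    (α : ℝ)
    (hα : IsGreatest {r : ℝ | ∃ i t, A i t ≠ 0 ∧
      r = Real.sqrt (∑ s, ((θ i : ℝ) * A s t * A i t) ^ 2)} α)
    (lammax : ℝ)
    (hlammax : IsGreatest
      {c : ℝ | ∃ v : Fin n → ℝ, v ≠ 0 ∧ (Aᵀ * A).mulVec v = c • v} lammax)
    (τ : ℕ)
    (k : ℕ → ℕ) (hk : ∀ j, j - τ ≤ k j ∧ k j ≤ j)
    (γ : ℝ) (hγ : 0 < γ)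
    {Ω : Type*} [MeasurableSpace Ω] (P : Measure Ω) [IsProbabilityMeasure P]
    (Z : ℕ → Ω → Fin m × Fin n)
    (hZmeas : ∀ j, Measurable (Z j))
    (hZindep : iIndepFun Z P)
    (hZdist : ∀ j (p : Fin m × Fin n),
      P {ω | Z j ω = p} =
        if A p.1 p.2 ≠ 0 then ((m : ENNReal) * (θ p.1 : ENNReal))⁻¹ else 0)
    (x0 : Fin n → ℝ)
    (x : ℕ → Ω → Fin n → ℝ)
    (hx0 : ∀ ω, x 0 ω = x0)
    (hrec : ∀ j ω s, x (j + 1) ω s = x j ω s -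
      (if s = (Z j ω).2 then
        γ * (θ (Z j ω).1 : ℝ) * A (Z j ω).1 (Z j ω).2 *
          ((∑ t, A (Z j ω).1 t * x (k j) ω t) - b (Z j ω).1)
       else 0))
    (j : ℕ) :
    (∫ ω, ∑ s, (A.mulVec (x (j + 1) ω) s - b s) ^ 2 ∂P) ≤ (∫ ω, ∑ s, (A.mulVec (x j ω) s - b s) ^ 2 ∂P)
      + α ^ 2 * γ ^ 2 / m * (∫ ω, ∑ s, (A.mulVec (x (k j) ω) s - b s) ^ 2 ∂P)
      - 2 * γ / m *
        (∫ ω, ∑ u, (Aᵀ.mulVec (A.mulVec (x (k j) ω) - b) u) ^ 2 ∂P)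
      + γ ^ 2 * lammax ^ 2 / m ^ 2 *
        ∑ d ∈ Finset.Ico (k j) j, ((∫ ω, ∑ s, (A.mulVec (x (k d) ω) s - b s) ^ 2 ∂P) + (∫ ω, ∑ s, (A.mulVec (x (k j) ω) s - b s) ^ 2 ∂P)) := by
  have hk' : ∀ j, k j ≤ j := fun j => (hk j).2
  have hlaw : ∀ r p, P.real (Z r ⁻¹' {p}) = rkProb A θ p := fun r p => by
    rw [measureReal_def, show Z r ⁻¹' {p} = {ω | Z r ω = p} from rfl, hZdist, rkProb]
    split_ifs <;> simp
  have hq : ∑ p, rkProb A θ p = 1 := by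
    simp_rw [← hlaw 0]
    rw [sum_measureReal_preimage_singleton _ fun p _ => hZmeas 0 (measurableSet_singleton p)]
    simp
  have : Inhabited (Fin m × Fin n) := ⟨Z 0 (nonempty_of_isProbabilityMeasure P).some⟩
  have hx : ∀ d ω, x d ω = asyRK A θ b γ hk' x0 d fun r => Z r ω := fun d ω =>
    eq_asyRK A θ b γ hk' x0 (x := (x · ω)) (hx0 ω) (fun d => funext fun s => by
      simp [hrec, rkStep, Pi.single_apply, mulVec, dotProduct]) d
  have hE : ∀ d ≤ j + 1, ∀ f : (Fin n → ℝ) → ℝ, ∫ ω, f (x d ω) ∂P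
      = pathExpect (rkProb A θ) (j + 1) fun z => f (asyRK A θ b γ hk' x0 d z) := by
    intro d hd f
    simp_rw [hx]
    exact integral_comp_asyRK_eq_pathExpect A θ b γ hk' x0 hZmeas hZindep hlaw hd f
  have hR : ∀ d ≤ j + 1, ∫ ω, ∑ s, (A.mulVec (x d ω) s - b s) ^ 2 ∂P
      = pathExpect (rkProb A θ) (j + 1) fun z =>
          asyResidual A θ b γ hk' x0 d z ⬝ᵥ asyResidual A θ b γ hk' x0 d z := fun d hd =>
    (hE d hd fun v => ∑ s, ((A *ᵥ v) s - b s) ^ 2).trans (by simp [asyResidual, dotProduct, sq])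
  have hS : ∫ ω, ∑ u, (Aᵀ.mulVec (A.mulVec (x (k j) ω) - b) u) ^ 2 ∂P
      = pathExpect (rkProb A θ) (j + 1) fun z => Aᵀ *ᵥ asyResidual A θ b γ hk' x0 (k j) z ⬝ᵥ
          Aᵀ *ᵥ asyResidual A θ b γ hk' x0 (k j) z :=
    (hE (k j) (by have := hk' j; omega) fun v => ∑ u, ((Aᵀ *ᵥ (A *ᵥ v - b)) u) ^ 2).trans
      (by simp [asyResidual, dotProduct, sq])
  have hα' : ∀ i t, A i t ≠ 0 → ∑ s, ((θ i : ℝ) * A s t * A i t) ^ 2 ≤ α ^ 2 :=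
    fun i t h => (Real.sqrt_le_iff.1 (hα.2 ⟨i, t, h, rfl⟩)).2
  obtain ⟨v, hv, hAv⟩ := hlammax.1
  have key := pathExpect_asyResidual_succ_le hθ hq b γ hk' x0 hγ.le hα'
    (nonneg_of_transpose_mul_self_mulVec_eq_smul A hv hAv) (fun μ hμ => hlammax.2 hμ)
    j.lt_succ_self
  rw [hR _ le_rfl, hR j j.le_succ, hR _ (by have := hk' j; omega), hS]
  convert key using 3
  exact sum_congr rfl fun d hd => by
    rw [hR (k d) (by have := hk' d; have := mem_Ico.1 hd; omega)]

theorem stmt10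
    {m n : ℕ} (hm : 0 < m) (hn : 0 < n)
    (A : Matrix (Fin m) (Fin n) ℝ) (b : Fin m → ℝ)
    (hconsistent : ∃ z : Fin n → ℝ, A.mulVec z = b)
    (hrows : ∀ i, ∑ t, (A i t) ^ 2 = 1)
    (θ : Fin m → ℕ)
    (hθ : ∀ i, θ i = (Finset.univ.filter (fun t => A i t ≠ 0)).card)
    (α : ℝ)
    (hα : IsGreatest {r : ℝ | ∃ i t, A i t ≠ 0 ∧
      r = Real.sqrt (∑ s, ((θ i : ℝ) * A s t * A i t) ^ 2)} α)
    (lammax : ℝ)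
    (hlammax : IsGreatest
      {c : ℝ | ∃ v : Fin n → ℝ, v ≠ 0 ∧ (Aᵀ * A).mulVec v = c • v} lammax)
    (τ : ℕ) (hτ : 1 ≤ τ)
    (k : ℕ → ℕ) (hk : ∀ j, j - τ ≤ k j ∧ k j ≤ j)
    (γ : ℝ) (hγ : 0 < γ)
    {Ω : Type*} [MeasurableSpace Ω] (P : Measure Ω) [IsProbabilityMeasure P]
    (Z : ℕ → Ω → Fin m × Fin n)
    (hZmeas : ∀ j, Measurable (Z j))
    (hZindep : iIndepFun Z P)
    (hZdist : ∀ j (p : Fin m × Fin n),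
      P {ω | Z j ω = p} =
        if A p.1 p.2 ≠ 0 then ((m : ENNReal) * (θ p.1 : ENNReal))⁻¹ else 0)
    (x0 : Fin n → ℝ)
    (x : ℕ → Ω → Fin n → ℝ)
    (hx0 : ∀ ω, x 0 ω = x0)
    (hrec : ∀ j ω s, x (j + 1) ω s = x j ω s -
      (if s = (Z j ω).2 then
        γ * (θ (Z j ω).1 : ℝ) * A (Z j ω).1 (Z j ω).2 *
          ((∑ t, A (Z j ω).1 t * x (k j) ω t) - b (Z j ω).1)
       else 0))
    (j : ℕ) :
    (∫ ω, ∑ s, (A.mulVec (x (j + 1) ω) s - b s) ^ 2 ∂P) ≤ (∫ ω, ∑ s, (A.mulVec (x j ω) s - b s) ^ 2 ∂P)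
      + α ^ 2 * γ ^ 2 / m * (∫ ω, ∑ s, (A.mulVec (x (k j) ω) s - b s) ^ 2 ∂P)
      - 2 * γ / m *
        (∫ ω, ∑ u, (Aᵀ.mulVec (A.mulVec (x (k j) ω) - b) u) ^ 2 ∂P)
      + γ ^ 2 * lammax ^ 2 / m ^ 2 *
        ∑ d ∈ Finset.Ico (k j) j, ((∫ ω, ∑ s, (A.mulVec (x (k d) ω) s - b s) ^ 2 ∂P) + (∫ ω, ∑ s, (A.mulVec (x (k j) ω) s - b s) ^ 2 ∂P)) :=
  stmt10_general A b θ hθ α hα lammax hlammax τ k hk γ hγ P Z hZmeas hZindep hZdist x0 x hx0 hrec j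
end

section
/- Let A be a nonzero real m×n matrix whose rank r is strictly less than m, let σ_r > 0 be its smallest nonzero singular value, and let ζ > 0. Then the smallest nonzero singular value of the (n+m)×(n+m) block matrix Ã = [[0, Aᵀ], [A, −ζI_m]] equals min{ ζ , (−ζ + √(ζ² + 4σ_r²))/2 }. -/
open MeasureTheory ProbabilityTheory Matrix Finset
open scoped Classical

set_option maxHeartbeats 1000000 in
private lemma smul_sum_elim {α β : Type*} (c : ℝ) (x : α → ℝ) (y : β → ℝ) :
    c • Sum.elim x y = Sum.elim (c • x) (c • y) := by
  funext i; cases i <;> rfl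

set_option maxHeartbeats 1000000 in
theorem stmt15
    {m n : ℕ} (hm : 0 < m) (hn : 0 < n)
    (A : Matrix (Fin m) (Fin n) ℝ) (hA : A ≠ 0)
    (hrank : A.rank < m)
    (σr : ℝ)
    (hσr : IsLeast {s : ℝ | 0 < s ∧ ∃ v : Fin n → ℝ, v ≠ 0 ∧
      (Aᵀ * A).mulVec v = (s ^ 2) • v} σr)
    (ζ : ℝ) (hζ : 0 < ζ) :
    IsLeast {s : ℝ | 0 < s ∧ ∃ w : (Fin n ⊕ Fin m) → ℝ, w ≠ 0 ∧
        ((Matrix.fromBlocks (0 : Matrix (Fin n) (Fin n) ℝ) Aᵀ A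
            (-(ζ • (1 : Matrix (Fin m) (Fin m) ℝ))))ᵀ *
          (Matrix.fromBlocks (0 : Matrix (Fin n) (Fin n) ℝ) Aᵀ A
            (-(ζ • (1 : Matrix (Fin m) (Fin m) ℝ))))).mulVec w = (s ^ 2) • w}
      (min ζ ((-ζ + Real.sqrt (ζ ^ 2 + 4 * σr ^ 2)) / 2)) := by
  set M : Matrix (Fin n ⊕ Fin m) (Fin n ⊕ Fin m) ℝ :=
    Matrix.fromBlocks 0 Aᵀ A (-(ζ • (1 : Matrix (Fin m) (Fin m) ℝ))) with hM
  have hMsymm : Mᵀ = M := by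
    rw [hM, Matrix.fromBlocks_transpose]
    congr 1 <;> simp [Matrix.transpose_smul]
  obtain ⟨⟨hσpos, v, hv0, hvEq⟩, hσlb⟩ := hσr
  set R : ℝ := Real.sqrt (ζ ^ 2 + 4 * σr ^ 2) with hR
  have hRnn : (0:ℝ) ≤ ζ ^ 2 + 4 * σr ^ 2 := by positivity
  have hRsq : R ^ 2 = ζ ^ 2 + 4 * σr ^ 2 := Real.sq_sqrt hRnn
  have hRgt : ζ < R := by
    have h1 : Real.sqrt (ζ ^ 2) < R := by
      apply Real.sqrt_lt_sqrt (by positivity); nlinarith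
    rwa [Real.sqrt_sq hζ.le] at h1
  set lam : ℝ := (-ζ + R) / 2 with hlam
  have hlampos : 0 < lam := by rw [hlam]; linarith
  have hlameq : lam * (lam + ζ) = σr ^ 2 := by
    rw [hlam]; nlinarith [hRsq]
  have eig_comp : ∀ (x : Fin n → ℝ) (y : Fin m → ℝ),
      M.mulVec (Sum.elim x y) = Sum.elim (Aᵀ.mulVec y) (A.mulVec x - ζ • y) := by
    intro x y
    rw [hM, Matrix.fromBlocks_mulVec]
    congr 1 <;> funext i <;>
      simp [Matrix.neg_mulVec, Matrix.smul_mulVec, sub_eq_add_neg]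
  constructor
  · -- membership
    refine ⟨lt_min hζ hlampos, ?_⟩
    rcases le_total ζ lam with hmin | hmin
    · -- min = ζ ; use kernel vector of Aᵀ
      rw [min_eq_left hmin]
      have hker : ∃ y : Fin m → ℝ, y ≠ 0 ∧ Aᵀ.mulVec y = 0 := by
        have hne : LinearMap.ker (Aᵀ.mulVecLin) ≠ ⊥ := by
          intro hbot
          have h2 := LinearMap.finrank_range_add_finrank_ker (Aᵀ.mulVecLin)
          rw [hbot, finrank_bot] at h2
          have h3 : Aᵀ.rank = A.rank := Matrix.rank_transpose A
          rw [Module.finrank_fin_fun] at h2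
          have : Aᵀ.rank = m := by simpa [Matrix.rank] using h2
          omega
        obtain ⟨y, hy, hy0⟩ := (Submodule.ne_bot_iff _).mp hne
        exact ⟨y, hy0, hy⟩
      obtain ⟨y, hy0, hyker⟩ := hker
      have key0 : M.mulVec (Sum.elim (0 : Fin n → ℝ) y)
          = (-ζ) • Sum.elim (0 : Fin n → ℝ) y := by
        rw [eig_comp, hyker, smul_sum_elim, Matrix.mulVec_zero]
        congr 1
        all_goals first
          | simp
          | module
      refine ⟨Sum.elim (0 : Fin n → ℝ) y, ?_, ?_⟩
      · intro h; apply hy0; funext i; exact congrFun h (Sum.inr i)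
      · rw [hMsymm, ← Matrix.mulVec_mulVec, key0, Matrix.mulVec_smul, key0,
          smul_smul]
        congr 1
        ring
    · -- min = lam ; use singular vector
      rw [min_eq_right hmin]
      have hc1 : Aᵀ.mulVec (A.mulVec v) = lam • ((lam + ζ) • v) := by
        rw [Matrix.mulVec_mulVec, hvEq, smul_smul, ← hlameq]
      have hc2 : A.mulVec ((lam + ζ) • v) - ζ • (A.mulVec v)
          = lam • (A.mulVec v) := by
        rw [Matrix.mulVec_smul]; module
      have key : M.mulVec (Sum.elim ((lam + ζ) • v) (A.mulVec v))
          = lam • Sum.elim ((lam + ζ) • v) (A.mulVec v) := by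
        rw [eig_comp, hc1, hc2, ← smul_sum_elim]
      refine ⟨Sum.elim ((lam + ζ) • v) (A.mulVec v), ?_, ?_⟩
      · intro h
        apply hv0
        have h1 : (lam + ζ) • v = 0 := by
          funext i; exact congrFun h (Sum.inl i)
        have h2 : lam + ζ ≠ 0 := by positivity
        simpa [h2] using h1
      · rw [hMsymm, ← Matrix.mulVec_mulVec, key, Matrix.mulVec_smul, key,
          smul_smul, ← pow_two]
  · -- lower bound
    rintro s ⟨hspos, w, hw0, hweq⟩
    rw [hMsymm, ← Matrix.mulVec_mulVec] at hweq
    have key : ∀ (c : ℝ), (c = s ∨ c = -s) → ∀ (p : (Fin n ⊕ Fin m) → ℝ),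
        p ≠ 0 → M.mulVec p = c • p → min ζ lam ≤ s := by
      intro c hc p hp0 heig
      have hc0 : c ≠ 0 := by
        rcases hc with h | h <;> subst h
        · exact ne_of_gt hspos
        · intro h; exact absurd (neg_eq_zero.mp h) (ne_of_gt hspos)
      set x := p ∘ Sum.inl with hx
      set y := p ∘ Sum.inr with hy
      have hp : p = Sum.elim x y := by funext i; cases i <;> rfl
      rw [hp, eig_comp, smul_sum_elim] at heig
      have h1 : Aᵀ.mulVec y = c • x := by
        funext i; exact congrFun heig (Sum.inl i)
      have h2 : A.mulVec x - ζ • y = c • y := by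
        funext i; exact congrFun heig (Sum.inr i)
      have h2' : A.mulVec x = (c + ζ) • y := by
        rw [add_smul, ← h2]; abel
      have hy0 : y ≠ 0 := by
        intro h
        apply hp0
        rw [hp, h]
        have hx0 : x = 0 := by
          have h1' := h1
          rw [h, Matrix.mulVec_zero] at h1'
          have h1'' := h1'.symm
          rwa [smul_eq_zero, or_iff_right hc0] at h1''
        rw [hx0]; funext i; cases i <;> rfl
      have hAAy : A.mulVec (Aᵀ.mulVec y) = (c ^ 2 + c * ζ) • y := by
        rw [h1, Matrix.mulVec_smul, h2', smul_smul]
        congr 1; ring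
      have hyy : 0 < y ⬝ᵥ y := by
        rcases lt_or_eq_of_le (Finset.sum_nonneg fun i _ => mul_self_nonneg (y i) :
            (0:ℝ) ≤ y ⬝ᵥ y) with h | h
        · exact h
        · exact absurd (dotProduct_self_eq_zero.mp h.symm) hy0
      have hmu : 0 ≤ c ^ 2 + c * ζ := by
        have hdp : y ⬝ᵥ A.mulVec (Aᵀ.mulVec y) = (Aᵀ.mulVec y) ⬝ᵥ (Aᵀ.mulVec y) := by
          rw [Matrix.dotProduct_mulVec, ← Matrix.mulVec_transpose]
        rw [hAAy, dotProduct_smul, smul_eq_mul] at hdp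
        have hnn : (0:ℝ) ≤ (Aᵀ.mulVec y) ⬝ᵥ (Aᵀ.mulVec y) :=
          Finset.sum_nonneg fun i _ => mul_self_nonneg _
        rw [← hdp] at hnn
        nlinarith [hyy]
      rcases eq_or_lt_of_le hmu with hmu0 | hmupos
      · -- c = -ζ, so s = ζ
        have hcz : c = -ζ := by
          have hprod : c * (c + ζ) = 0 := by nlinarith
          rcases mul_eq_zero.mp hprod with h | h
          · exact absurd h hc0
          · linarith
        rcases hc with h | h
        · exfalso; rw [h] at hcz; linarith
        · have hs : s = ζ := by rw [h] at hcz; linarith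
          rw [hs]; exact min_le_left _ _
      · -- μ > 0 is an eigenvalue of AᵀA
        have hvne : Aᵀ.mulVec y ≠ 0 := by
          intro h
          rw [h, Matrix.mulVec_zero] at hAAy
          rcases smul_eq_zero.mp hAAy.symm with h' | h'
          · nlinarith
          · exact hy0 h'
        have hAAv : (Aᵀ * A).mulVec (Aᵀ.mulVec y) = (c ^ 2 + c * ζ) • (Aᵀ.mulVec y) := by
          rw [← Matrix.mulVec_mulVec, hAAy, Matrix.mulVec_smul]
        have hsig : σr ≤ Real.sqrt (c ^ 2 + c * ζ) := by
          apply hσlb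
          refine ⟨Real.sqrt_pos.mpr hmupos, Aᵀ.mulVec y, hvne, ?_⟩
          rw [Real.sq_sqrt hmupos.le]
          exact hAAv
        have hsig2 : σr ^ 2 ≤ c ^ 2 + c * ζ := by
          have h := pow_le_pow_left₀ hσpos.le hsig 2
          rwa [Real.sq_sqrt hmupos.le] at h
        rcases hc with h | h
        · -- c = s : lam ≤ s
          subst h
          refine le_trans (min_le_right _ _) ?_
          have hRle : R ≤ 2 * c + ζ := by
            have h1 : ζ ^ 2 + 4 * σr ^ 2 ≤ (2 * c + ζ) ^ 2 := by nlinarith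
            calc R ≤ Real.sqrt ((2 * c + ζ) ^ 2) := Real.sqrt_le_sqrt h1
              _ = 2 * c + ζ := Real.sqrt_sq (by linarith)
          rw [hlam]; linarith
        · -- c = -s : s > ζ
          subst h
          refine le_trans (min_le_left _ _) ?_
          nlinarith
    by_cases hu : M.mulVec w + s • w = 0
    · have heig : M.mulVec w = (-s) • w := by
        rw [neg_smul, ← sub_eq_zero, sub_neg_eq_add]; exact hu
      exact key (-s) (Or.inr rfl) w hw0 heig
    · apply key s (Or.inl rfl) (M.mulVec w + s • w) hu
      rw [Matrix.mulVec_add, Matrix.mulVec_mulVec, ← Matrix.mulVec_mulVec, hweq,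
        Matrix.mulVec_smul, smul_add, smul_smul, ← pow_two]
      abel
end

section
/- Let A be a nonzero real m×n matrix whose rank r is strictly less than m, let σ_r > 0 be its smallest nonzero singular value, and for ζ > 0 let Ã(ζ) = [[0, Aᵀ], [A, −ζI_m]]. Then for every ζ > 0, the ratio of the smallest nonzero eigenvalue of Ã(ζ)ᵀÃ(ζ) to ‖Ã(ζ)‖_F² satisfies (smallest nonzero eigenvalue of Ã(ζ)ᵀÃ(ζ)) / ‖Ã(ζ)‖_F² ≤ σ_r² / (4‖A‖_F² + mσ_r²), with equality when ζ = σ_r/√2. -/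
open Matrix

noncomputable def Bmat {m n : ℕ} (A : Matrix (Fin m) (Fin n) ℝ) (ζ : ℝ) :
    Matrix (Fin n ⊕ Fin m) (Fin n ⊕ Fin m) ℝ :=
  Matrix.fromBlocks (0 : Matrix (Fin n) (Fin n) ℝ) Aᵀ A
    (-(ζ • (1 : Matrix (Fin m) (Fin m) ℝ)))

lemma Bmat_transpose {m n : ℕ} (A : Matrix (Fin m) (Fin n) ℝ) (ζ : ℝ) :
    (Bmat A ζ)ᵀ = Bmat A ζ := by
  simp [Bmat, Matrix.fromBlocks_transpose]

lemma Bmat_mulVec {m n : ℕ} (A : Matrix (Fin m) (Fin n) ℝ) (ζ : ℝ)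
    (x : Fin n → ℝ) (y : Fin m → ℝ) :
    Bmat A ζ *ᵥ Sum.elim x y = Sum.elim (Aᵀ *ᵥ y) (A *ᵥ x - ζ • y) := by
  rw [Bmat, Matrix.fromBlocks_mulVec]
  funext i
  cases i <;>
    simp [Matrix.neg_mulVec, Matrix.smul_mulVec, sub_eq_add_neg]

lemma BB_mulVec {m n : ℕ} (A : Matrix (Fin m) (Fin n) ℝ) (ζ : ℝ)
    (x : Fin n → ℝ) (y : Fin m → ℝ) :
    ((Bmat A ζ)ᵀ * Bmat A ζ) *ᵥ Sum.elim x y =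
      Sum.elim (Aᵀ *ᵥ (A *ᵥ x) - ζ • (Aᵀ *ᵥ y))
        ((A *ᵥ (Aᵀ *ᵥ y) - ζ • (A *ᵥ x)) + (ζ ^ 2) • y) := by
  rw [Bmat_transpose, ← Matrix.mulVec_mulVec, Bmat_mulVec, Bmat_mulVec]
  funext i
  cases i <;>
    simp [Matrix.mulVec_sub, Matrix.mulVec_smul, Pi.smul_apply, smul_eq_mul,
      Pi.sub_apply, Pi.add_apply] <;> ring

lemma eig_AtA_nonneg {m n : ℕ} (A : Matrix (Fin m) (Fin n) ℝ) {lam : ℝ}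
    {u : Fin n → ℝ} (hu : u ≠ 0) (he : Aᵀ *ᵥ (A *ᵥ u) = lam • u) :
    0 ≤ lam := by
  have h1 : u ⬝ᵥ (Aᵀ *ᵥ (A *ᵥ u)) = (A *ᵥ u) ⬝ᵥ (A *ᵥ u) := by
    rw [Matrix.dotProduct_mulVec, Matrix.vecMul_transpose]
  rw [he, dotProduct_smul, smul_eq_mul] at h1
  have h2 : 0 < u ⬝ᵥ u := by
    rcases Function.ne_iff.mp hu with ⟨i, hi⟩
    refine Finset.sum_pos' (fun j _ => mul_self_nonneg _) ⟨i, Finset.mem_univ i, ?_⟩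
    exact mul_self_pos.mpr (by simpa using hi)
  have h3 : 0 ≤ (A *ᵥ u) ⬝ᵥ (A *ᵥ u) := Finset.sum_nonneg fun j _ => mul_self_nonneg _
  nlinarith

lemma sig_le {m n : ℕ} (A : Matrix (Fin m) (Fin n) ℝ) (σr : ℝ)
    (hlb : ∀ s : ℝ, (0 < s ∧ ∃ v : Fin n → ℝ, v ≠ 0 ∧ (Aᵀ * A).mulVec v = (s ^ 2) • v) → σr ≤ s)
    {lam : ℝ} {u : Fin n → ℝ} (hl : 0 < lam) (hu : u ≠ 0)
    (he : Aᵀ *ᵥ (A *ᵥ u) = lam • u) (hσpos : 0 < σr) :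
    σr ^ 2 ≤ lam := by
  have hs : σr ≤ Real.sqrt lam := by
    refine hlb _ ⟨Real.sqrt_pos.mpr hl, u, hu, ?_⟩
    rw [← Matrix.mulVec_mulVec, he, Real.sq_sqrt hl.le]
  nlinarith [Real.sq_sqrt hl.le, Real.sqrt_nonneg lam]


lemma exists_ker {m n : ℕ} (A : Matrix (Fin m) (Fin n) ℝ) (hrank : A.rank < m) :
    ∃ u : Fin m → ℝ, u ≠ 0 ∧ Aᵀ *ᵥ u = 0 := by
  by_contra h
  push_neg at h
  have hinj : Function.Injective (Aᵀ.mulVecLin) := by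
    rw [← LinearMap.ker_eq_bot, LinearMap.ker_eq_bot']
    intro u hu
    by_contra hu0
    exact (h u hu0) hu
  have h1 : Aᵀ.rank = m := by
    rw [Matrix.rank, LinearMap.finrank_range_of_inj hinj]
    simp [Module.finrank_fin_fun]
  rw [Matrix.rank_transpose] at h1
  omega

lemma mem_zeta_sq {m n : ℕ} (A : Matrix (Fin m) (Fin n) ℝ) {u : Fin m → ℝ}
    (hu0 : u ≠ 0) (hAu : Aᵀ *ᵥ u = 0) (ζ : ℝ) :
    ∃ w : Fin n ⊕ Fin m → ℝ, w ≠ 0 ∧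
      ((Bmat A ζ)ᵀ * Bmat A ζ) *ᵥ w = (ζ ^ 2) • w := by
  refine ⟨Sum.elim 0 u, ?_, ?_⟩
  · intro h
    apply hu0
    funext j
    have := congrFun h (Sum.inr j)
    simpa using this
  · rw [BB_mulVec]
    funext i
    cases i <;> simp [hAu, Matrix.mulVec_zero]
lemma lower_bound {m n : ℕ} (A : Matrix (Fin m) (Fin n) ℝ) (σr : ℝ) (hσpos : 0 < σr)
    (hlb : ∀ s : ℝ, (0 < s ∧ ∃ v : Fin n → ℝ, v ≠ 0 ∧ (Aᵀ * A).mulVec v = (s ^ 2) • v) → σr ≤ s)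
    {c : ℝ} (hc : c ≠ 0) {w : Fin n ⊕ Fin m → ℝ} (hw : w ≠ 0)
    (heig : ((Bmat A (σr / Real.sqrt 2))ᵀ * Bmat A (σr / Real.sqrt 2)) *ᵥ w = c • w) :
    σr ^ 2 / 2 ≤ c := by
  set ζ : ℝ := σr / Real.sqrt 2 with hζdef
  have hζ : 0 < ζ := div_pos hσpos (Real.sqrt_pos.mpr two_pos)
  have hζ2 : ζ ^ 2 = σr ^ 2 / 2 := by
    rw [hζdef, div_pow, Real.sq_sqrt (by norm_num : (0:ℝ) ≤ 2)]
  set x : Fin n → ℝ := fun i => w (Sum.inl i) with hxdef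
  set y : Fin m → ℝ := fun j => w (Sum.inr j) with hydef
  have hxy : w = Sum.elim x y := by funext i; cases i <;> rfl
  rw [hxy, BB_mulVec] at heig
  have eq1 : Aᵀ *ᵥ (A *ᵥ x) - ζ • (Aᵀ *ᵥ y) = c • x := by
    funext i; have := congrFun heig (Sum.inl i); simpa using this
  have eq2 : (A *ᵥ (Aᵀ *ᵥ y) - ζ • (A *ᵥ x)) + (ζ ^ 2) • y = c • y := by
    funext j; have := congrFun heig (Sum.inr j); simpa using this
  -- positivity of c
  have hww : 0 < Sum.elim x y ⬝ᵥ Sum.elim x y := by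
    rcases Function.ne_iff.mp (hxy ▸ hw) with ⟨i, hi⟩
    refine Finset.sum_pos' (fun j _ => mul_self_nonneg _) ⟨i, Finset.mem_univ i, ?_⟩
    exact mul_self_pos.mpr (by simpa using hi)
  have hcpos : 0 < c := by
    have h1 : Sum.elim x y ⬝ᵥ (((Bmat A ζ)ᵀ * Bmat A ζ) *ᵥ Sum.elim x y)
        = (Bmat A ζ *ᵥ Sum.elim x y) ⬝ᵥ (Bmat A ζ *ᵥ Sum.elim x y) := by
      rw [← Matrix.mulVec_mulVec, Matrix.dotProduct_mulVec, Matrix.vecMul_transpose]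
    have h2 : ((Bmat A ζ)ᵀ * Bmat A ζ) *ᵥ Sum.elim x y = c • Sum.elim x y := by
      rw [BB_mulVec]
      funext i; cases i
      · simpa using congrFun eq1 _
      · simpa using congrFun eq2 _
    rw [h2, dotProduct_smul, smul_eq_mul] at h1
    have h3 : 0 ≤ (Bmat A ζ *ᵥ Sum.elim x y) ⬝ᵥ (Bmat A ζ *ᵥ Sum.elim x y) :=
      Finset.sum_nonneg fun j _ => mul_self_nonneg _
    have h4 : 0 ≤ c := by nlinarith
    exact lt_of_le_of_ne h4 (Ne.symm hc)
  set d : ℝ := Real.sqrt c with hddef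
  have hd : d ^ 2 = c := Real.sq_sqrt hcpos.le
  have hdpos : 0 < d := Real.sqrt_pos.mpr hcpos
  set q : Fin n → ℝ := Aᵀ *ᵥ y with hqdef
  have hSp : Aᵀ *ᵥ (A *ᵥ x) = c • x + ζ • q := by
    rw [← eq1]
    funext t
    simp only [Pi.sub_apply, Pi.add_apply, Pi.smul_apply, smul_eq_mul]
    ring
  have hSq : Aᵀ *ᵥ (A *ᵥ q) = (ζ * c) • x + c • q := by
    have h2 := congrArg (fun z => Aᵀ *ᵥ z) eq2
    simp only [Matrix.mulVec_add, Matrix.mulVec_sub, Matrix.mulVec_smul] at h2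
    rw [hSp] at h2
    funext t
    have h3 := congrFun h2 t
    simp only [Pi.add_apply, Pi.sub_apply, Pi.smul_apply, smul_eq_mul] at h3 ⊢
    linarith [h3]
  by_cases hplus : d • x + q = 0
  · -- q = -(d • x)
    have hq : ∀ t, q t = -(d * x t) := fun t => by
      have := congrFun hplus t; simp at this; linarith
    by_cases hx : x = 0
    · have hq0 : q = 0 := by funext t; rw [hq t, hx]; simp
      have hy : y ≠ 0 := by
        intro h0y
        apply hw
        rw [hxy, hx, h0y]
        funext i; cases i <;> simp
      rcases Function.ne_iff.mp hy with ⟨j, hj⟩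
      replace hj : y j ≠ 0 := by simpa using hj
      have h5 : ζ ^ 2 * y j = c * y j := by
        have h4 := congrFun eq2 j
        rw [hx, hq0] at h4
        simpa using h4
      have hcz : c = ζ ^ 2 := by
        have := mul_right_cancel₀ hj h5
        linarith
      rw [hcz, hζ2]
    · have heigm : Aᵀ *ᵥ (A *ᵥ x) = (c - ζ * d) • x := by
        funext t
        have h1 := congrFun hSp t
        simp only [Pi.add_apply, Pi.smul_apply, smul_eq_mul] at h1 ⊢
        rw [hq t] at h1
        linarith
      have hnn : 0 ≤ c - ζ * d := eig_AtA_nonneg A hx heigm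
      rcases eq_or_lt_of_le hnn with hlt | hlt
      · have hdz : d * d = ζ * d := by nlinarith
        have : d = ζ := mul_right_cancel₀ hdpos.ne' hdz
        nlinarith
      · have := sig_le A σr hlb hlt hx heigm hσpos
        nlinarith [mul_pos hζ hdpos, sq_nonneg σr]
  · -- eigenvector d•x + q with eigenvalue c + d*ζ
    have heigp : Aᵀ *ᵥ (A *ᵥ (d • x + q)) = (c + d * ζ) • (d • x + q) := by
      rw [Matrix.mulVec_add, Matrix.mulVec_add, Matrix.mulVec_smul, Matrix.mulVec_smul,
        hSp, hSq]
      funext t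
      simp only [Pi.add_apply, Pi.smul_apply, smul_eq_mul]
      linear_combination (-(ζ * x t)) * hd
    have hlam : 0 < c + d * ζ := by positivity
    have hs := sig_le A σr hlb hlam hplus heigp hσpos
    nlinarith [mul_pos hdpos hζ]

open MeasureTheory ProbabilityTheory Matrix Finset
open scoped Classical

set_option maxHeartbeats 1000000 in
theorem stmt16
    {m n : ℕ} (hm : 0 < m) (hn : 0 < n)
    (A : Matrix (Fin m) (Fin n) ℝ) (hA : A ≠ 0)
    (hrank : A.rank < m)
    (σr : ℝ)
    (hσr : IsLeast {s : ℝ | 0 < s ∧ ∃ v : Fin n → ℝ, v ≠ 0 ∧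
      (Aᵀ * A).mulVec v = (s ^ 2) • v} σr) :
    (∀ ζ : ℝ, 0 < ζ → ∀ lminζ : ℝ,
      IsLeast {c : ℝ | c ≠ 0 ∧ ∃ w : (Fin n ⊕ Fin m) → ℝ, w ≠ 0 ∧
          ((Matrix.fromBlocks (0 : Matrix (Fin n) (Fin n) ℝ) Aᵀ A
              (-(ζ • (1 : Matrix (Fin m) (Fin m) ℝ))))ᵀ *
            (Matrix.fromBlocks (0 : Matrix (Fin n) (Fin n) ℝ) Aᵀ A
              (-(ζ • (1 : Matrix (Fin m) (Fin m) ℝ))))).mulVec w = c • w} lminζ →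
      lminζ / (2 * (∑ i, ∑ t, (A i t) ^ 2) + m * ζ ^ 2)
        ≤ σr ^ 2 / (4 * (∑ i, ∑ t, (A i t) ^ 2) + m * σr ^ 2)) ∧
    (∀ lmin0 : ℝ,
      IsLeast {c : ℝ | c ≠ 0 ∧ ∃ w : (Fin n ⊕ Fin m) → ℝ, w ≠ 0 ∧
          ((Matrix.fromBlocks (0 : Matrix (Fin n) (Fin n) ℝ) Aᵀ A
              (-((σr / Real.sqrt 2) • (1 : Matrix (Fin m) (Fin m) ℝ))))ᵀ *
            (Matrix.fromBlocks (0 : Matrix (Fin n) (Fin n) ℝ) Aᵀ A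
              (-((σr / Real.sqrt 2) • (1 : Matrix (Fin m) (Fin m) ℝ))))).mulVec w
            = c • w} lmin0 →
      lmin0 / (2 * (∑ i, ∑ t, (A i t) ^ 2) + m * (σr / Real.sqrt 2) ^ 2)
        = σr ^ 2 / (4 * (∑ i, ∑ t, (A i t) ^ 2) + m * σr ^ 2)) := by
  obtain ⟨⟨hσpos, v, hv0, hvv⟩, hlb'⟩ := hσr
  have hlb : ∀ s : ℝ, (0 < s ∧ ∃ v : Fin n → ℝ, v ≠ 0 ∧
      (Aᵀ * A).mulVec v = (s ^ 2) • v) → σr ≤ s := fun s hs => hlb' hs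
  obtain ⟨u, hu0, hAu⟩ := exists_ker A hrank
  have hv : Aᵀ *ᵥ (A *ᵥ v) = (σr ^ 2) • v := by
    rw [Matrix.mulVec_mulVec]; exact hvv
  have hF0 : (0:ℝ) ≤ ∑ i, ∑ t, (A i t) ^ 2 :=
    Finset.sum_nonneg fun i _ => Finset.sum_nonneg fun t _ => sq_nonneg _
  set F : ℝ := ∑ i, ∑ t, (A i t) ^ 2 with hFdef
  have hm' : (1:ℝ) ≤ (m:ℝ) := by exact_mod_cast hm
  constructor
  · intro ζ hζ lminζ hL
    have hden1 : 0 < 2 * F + (m:ℝ) * ζ ^ 2 := by nlinarith [pow_pos hζ 2]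
    have hden2 : 0 < 4 * F + (m:ℝ) * σr ^ 2 := by nlinarith [pow_pos hσpos 2]
    have hmem1 : lminζ ≤ ζ ^ 2 := by
      obtain ⟨w, hw, he⟩ := mem_zeta_sq A hu0 hAu ζ
      exact hL.2 ⟨pow_ne_zero 2 hζ.ne', w, hw, he⟩
    set s : ℝ := Real.sqrt (ζ ^ 2 + 4 * σr ^ 2) with hsdef
    have hs2 : s ^ 2 = ζ ^ 2 + 4 * σr ^ 2 := Real.sq_sqrt (by positivity)
    have hsn : 0 ≤ s := Real.sqrt_nonneg _
    set μ : ℝ := (s - ζ) / 2 with hμdef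
    have hμpos : 0 < μ := by
      rw [hμdef]
      have : ζ < s := by nlinarith
      linarith
    have hμ : μ ^ 2 + ζ * μ = σr ^ 2 := by
      have h1 : μ ^ 2 + ζ * μ = (s ^ 2 - ζ ^ 2) / 4 := by rw [hμdef]; ring
      rw [hs2] at h1; linarith
    have hmem2 : lminζ ≤ μ ^ 2 := by
      refine hL.2 ⟨pow_ne_zero 2 hμpos.ne', Sum.elim ((σr ^ 2) • v) (μ • (A *ᵥ v)), ?_, ?_⟩
      · intro h
        apply hv0
        funext i
        have := congrFun h (Sum.inl i)
        simp [Pi.smul_apply, smul_eq_mul] at this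
        rcases this with h' | h'
        · exact absurd h' (by positivity)
        · exact h'
      · show ((Bmat A ζ)ᵀ * Bmat A ζ) *ᵥ _ = _
        rw [BB_mulVec]
        funext i
        cases i with
        | inl i =>
          simp only [Matrix.mulVec_smul, hv, Sum.elim_inl, Pi.sub_apply, Pi.smul_apply,
            smul_eq_mul]
          linear_combination (-(σr ^ 2 * v i)) * hμ
        | inr j =>
          simp only [Matrix.mulVec_smul, hv, Sum.elim_inr, Pi.add_apply, Pi.sub_apply,
            Pi.smul_apply, smul_eq_mul]
          linear_combination ((ζ - μ) * (A *ᵥ v) j) * hμ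
    rw [div_le_div_iff₀ hden1 hden2]
    by_cases hcase : ζ ^ 2 ≤ σr ^ 2 / 2
    · have t1 := mul_le_mul_of_nonneg_right hmem1 hden2.le
      have t2 : (0:ℝ) ≤ 2 * F * (σr ^ 2 - 2 * ζ ^ 2) :=
        mul_nonneg (by linarith) (by linarith)
      nlinarith [t1, t2]
    · push_neg at hcase
      have hμζ : μ ≤ ζ := by nlinarith [mul_pos hμpos hζ, mul_pos hμpos hμpos]
      have hμle : μ ^ 2 ≤ σr ^ 2 / 2 := by nlinarith [mul_le_mul_of_nonneg_right hμζ hμpos.le]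
      have h1 : lminζ ≤ σr ^ 2 / 2 := le_trans hmem2 hμle
      have t1 := mul_le_mul_of_nonneg_right h1 hden2.le
      have t2 : (0:ℝ) ≤ σr ^ 2 * (m:ℝ) * (ζ ^ 2 - σr ^ 2 / 2) :=
        mul_nonneg (mul_nonneg (sq_nonneg σr) (by linarith)) (by linarith)
      nlinarith [t1, t2]
  · intro lmin0 hL
    have hζ0 : 0 < σr / Real.sqrt 2 := div_pos hσpos (Real.sqrt_pos.mpr two_pos)
    have hζ02 : (σr / Real.sqrt 2) ^ 2 = σr ^ 2 / 2 := by
      rw [div_pow, Real.sq_sqrt (by norm_num : (0:ℝ) ≤ 2)]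
    have hup : lmin0 ≤ σr ^ 2 / 2 := by
      obtain ⟨w, hw, he⟩ := mem_zeta_sq A hu0 hAu (σr / Real.sqrt 2)
      have := hL.2 ⟨pow_ne_zero 2 hζ0.ne', w, hw, he⟩
      linarith [hζ02 ▸ this]
    have hlo : σr ^ 2 / 2 ≤ lmin0 := by
      obtain ⟨hc, w, hw, heig⟩ := hL.1
      exact lower_bound A σr hσpos hlb hc hw heig
    have hval : lmin0 = σr ^ 2 / 2 := le_antisymm hup hlo
    have hden1 : 0 < 2 * F + (m:ℝ) * (σr ^ 2 / 2) := by nlinarith [pow_pos hσpos 2]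
    have hden2 : 0 < 4 * F + (m:ℝ) * σr ^ 2 := by nlinarith [pow_pos hσpos 2]
    rw [hval, hζ02, div_eq_div_iff hden1.ne' hden2.ne']
    ring
end
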